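/- arXiv:2201.10533 — 4 statements merged into one kernel-verified Lean document; each statement's English description precedes it below -/
import Mathlib

section
/- Let (X,Y) be a promising partial layout of a planar tanglegram (T,S,φ), let E be the set of pairs (u,v) with u ∈ X and v ∈ Y such that some leaf descendant of u is matched by φ with some leaf descendant of v, and let u be a vertex of highest degree in the bipartite graph (X,E,Y); suppose u is an internal vertex with children u_1, u_2 (say u ∈ X; the case u ∈ Y is symmetric). Then: (a) if deg(u) = 1, both of the partial layouts obtained by replacing u in X with the consecutive pair u_1 u_2 or with u_2 u_1 are promising; (b) if deg(u) > 1, then exactly one of these two partial layouts is promising. -/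
/-!
# Tanglegrams

A rooted binary tree is modelled by the inductive type `BTree`, whose leaves carry
natural-number labels.  Vertices of a tree are identified with the sets of labels of
their leaf descendants (their *clades*): since all leaf labels of the trees occurring
in a tanglegram are distinct, this identification is injective.

A tanglegram of size `n` consists of two rooted binary trees whose leaves are labelled
bijectively by `{0, …, n-1}` together with a permutation `φ` matching leaf `t i` of
the first tree with leaf `s (φ i)` of the second tree.

A layout is recorded by the pair of lists of leaf labels of the two trees, read from
top to bottom; the defining property is that the leaf set of every vertex occupies a
consecutive block.
-/

/-- A rooted binary tree with leaves labelled by natural numbers. -/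
inductive BTree : Type
  | leaf : ℕ → BTree
  | node : BTree → BTree → BTree

namespace BTree

/-- The list of leaf labels of a tree, from left to right. -/
def leafList : BTree → List ℕ
  | .leaf i => [i]
  | .node l r => l.leafList ++ r.leafList

/-- The set of leaf labels of a tree. -/
def leaves (t : BTree) : Finset ℕ := t.leafList.toFinset

/-- `t.Clade s` : `s` is the set of labels of the leaf descendants of some vertex
of `t`. -/
def Clade : BTree → Finset ℕ → Prop
  | .leaf i, s => s = {i}
  | .node l r, s => s = (BTree.node l r).leaves ∨ l.Clade s ∨ r.Clade s

/-- `t.InternalClade s` : `s` is the set of labels of the leaf descendants of some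
*internal* vertex of `t`. -/
def InternalClade : BTree → Finset ℕ → Prop
  | .leaf _, _ => False
  | .node l r, s => s = (BTree.node l r).leaves ∨ l.InternalClade s ∨ r.InternalClade s

/-- `t.NodeClades c c₁ c₂` : some internal vertex of `t` has leaf-label set `c`, and
its two children have leaf-label sets `c₁` and `c₂` (in left-right order). -/
def NodeClades : BTree → Finset ℕ → Finset ℕ → Finset ℕ → Prop
  | .leaf _, _, _, _ => False
  | .node l r, c, c₁, c₂ =>
      (c = (BTree.node l r).leaves ∧ c₁ = l.leaves ∧ c₂ = r.leaves) ∨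
      l.NodeClades c c₁ c₂ ∨ r.NodeClades c c₁ c₂

end BTree

/-- A tanglegram of size `n` : two rooted binary trees `T` and `S` whose leaves are
labelled bijectively by `{0, …, n-1}`, together with a permutation `φ` matching the
leaf of `T` labelled `i` with the leaf of `S` labelled `φ i`.  (The permutation is
normalised to be the identity off `{0, …, n-1}`.) -/
structure Tanglegram (n : ℕ) where
  T : BTree
  S : BTree
  φ : Equiv.Perm ℕ
  hT : T.leafList.Nodup ∧ ∀ i, i ∈ T.leafList ↔ i < n
  hS : S.leafList.Nodup ∧ ∀ i, i ∈ S.leafList ↔ i < n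
  hφ : ∀ i, n ≤ i → φ i = i

/-- The elements of the finite set `s` occur as a consecutive block of the list `X`. -/
def ConsecIn (X : List ℕ) (s : Finset ℕ) : Prop :=
  ∃ l m r : List ℕ, X = l ++ m ++ r ∧ ∀ a, a ∈ m ↔ a ∈ s

/-- `(X, Y)` is a layout of the tanglegram `G` : `X` is an ordering of the leaf labels
of `T`, `Y` one of the leaf labels of `S`, and the leaf set of every vertex of either
tree forms a consecutive block. -/
def IsLayout {n : ℕ} (G : Tanglegram n) (X Y : List ℕ) : Prop :=
  X.Perm G.T.leafList ∧ Y.Perm G.S.leafList ∧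
    (∀ s, G.T.Clade s → ConsecIn X s) ∧ (∀ s, G.S.Clade s → ConsecIn Y s)

/-- The between-tree edges `e i` and `e j` cross in the layout `(X, Y)` :
`t i` precedes `t j` in `X` while `s (φ j)` precedes `s (φ i)` in `Y`. -/
def Crossing {n : ℕ} (G : Tanglegram n) (X Y : List ℕ) (i j : ℕ) : Prop :=
  i < n ∧ j < n ∧ X.idxOf i < X.idxOf j ∧ Y.idxOf (G.φ j) < Y.idxOf (G.φ i)

/-- The number of crossings of the layout `(X, Y)` (each crossing pair of between-tree
edges is counted once, ordered by position in `X`). -/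
def crossCount {n : ℕ} (G : Tanglegram n) (X Y : List ℕ) : ℕ :=
  ((Finset.range n ×ˢ Finset.range n).filter fun p =>
    X.idxOf p.1 < X.idxOf p.2 ∧ Y.idxOf (G.φ p.2) < Y.idxOf (G.φ p.1)).card

/-- A planar layout is a layout with no crossings. -/
def IsPlanarLayout {n : ℕ} (G : Tanglegram n) (X Y : List ℕ) : Prop :=
  IsLayout G X Y ∧ ∀ i j, ¬ Crossing G X Y i j

/-- A tanglegram is planar if it admits a planar layout. -/
def IsPlanarTanglegram {n : ℕ} (G : Tanglegram n) : Prop :=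
  ∃ X Y, IsPlanarLayout G X Y

/-- The crossing number: the minimum number of crossings over all layouts. -/
noncomputable def crt {n : ℕ} (G : Tanglegram n) : ℕ :=
  sInf {c | ∃ X Y, IsLayout G X Y ∧ crossCount G X Y = c}

/-- `(cu, cv)` is a leaf-matched pair of `G` (a pair of internal vertices, recorded by
their leaf-label sets, such that `φ` matches the leaves below the first exactly with
the leaves below the second). -/
def LeafMatchedPair {n : ℕ} (G : Tanglegram n) (cu cv : Finset ℕ) : Prop :=
  G.T.InternalClade cu ∧ G.S.InternalClade cv ∧ cv = cu.image G.φ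

/-- A tanglegram (of size at least 2) is irreducible if its only leaf-matched pair is
the pair of roots. -/
def IrreducibleTanglegram {n : ℕ} (G : Tanglegram n) : Prop :=
  2 ≤ n ∧ ∀ cu cv, LeafMatchedPair G cu cv →
    cu = Finset.range n ∧ cv = Finset.range n

/-- `X'` is obtained from `X` by reversing the consecutive block consisting of the
elements of `s` : the effect on a layout of a flip at the vertex with leaf set `s`. -/
def FlipBlock (s : Finset ℕ) (X X' : List ℕ) : Prop :=
  ∃ l m r : List ℕ, X = l ++ m ++ r ∧ (∀ a, a ∈ m ↔ a ∈ s) ∧ X' = l ++ m.reverse ++ r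

/-- `X'` is obtained from `X` by interchanging the adjacent blocks consisting of the
elements of `s₁` and of `s₂` (occurring in this order), keeping the relative order of
the elements within each block. -/
def SwitchBlock (s₁ s₂ : Finset ℕ) (X X' : List ℕ) : Prop :=
  ∃ l m₁ m₂ r : List ℕ, X = l ++ m₁ ++ m₂ ++ r ∧ (∀ a, a ∈ m₁ ↔ a ∈ s₁) ∧
    (∀ a, a ∈ m₂ ↔ a ∈ s₂) ∧ X' = l ++ m₂ ++ m₁ ++ r

/-- The effect of a subtree switch at an internal vertex whose children have leaf sets
`c₁` and `c₂` (in either order in the layout). -/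
def SwitchAt (c₁ c₂ : Finset ℕ) (X X' : List ℕ) : Prop :=
  SwitchBlock c₁ c₂ X X' ∨ SwitchBlock c₂ c₁ X X'

/-- One paired flip at a leaf-matched pair of `G`, acting on layouts. -/
def PairedFlipStep {n : ℕ} (G : Tanglegram n) (p q : List ℕ × List ℕ) : Prop :=
  ∃ cu cv, LeafMatchedPair G cu cv ∧ FlipBlock cu p.1 q.1 ∧ FlipBlock cv p.2 q.2

/-! ## Induced subtanglegrams

For `I ⊆ {0, …, n-1}`, the induced subtanglegram `(T_I, S_{φ(I)}, φ|_I)` is obtained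
by keeping only the leaves indexed by `I` (resp. `φ(I)`) and suppressing vertices with
a single remaining child.  Its vertices are identified with the vertices of `T`, `S`
that survive, and the clades of `T_I` are exactly the nonempty sets `c ∩ I` for `c` a
clade of `T`. -/

/-- `(A, B)` is a layout of the subtanglegram of `G` induced by `I` : `A` orders the
leaf labels in `I`, `B` those in `φ(I)`, and every clade of the induced subtrees is
consecutive. -/
def IsSubLayout {n : ℕ} (G : Tanglegram n) (I : Finset ℕ) (A B : List ℕ) : Prop :=
  A.Nodup ∧ (∀ a, a ∈ A ↔ a ∈ I) ∧ B.Nodup ∧ (∀ b, b ∈ B ↔ b ∈ I.image G.φ) ∧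
    (∀ c, G.T.Clade c → ConsecIn A (c ∩ I)) ∧
    (∀ c, G.S.Clade c → ConsecIn B (c ∩ I.image G.φ))

/-- A planar layout of the subtanglegram induced by `I` : a layout in which no two of
the between-tree edges indexed by `I` cross. -/
def IsPlanarSubLayout {n : ℕ} (G : Tanglegram n) (I : Finset ℕ) (A B : List ℕ) : Prop :=
  IsSubLayout G I A B ∧ ∀ i ∈ I, ∀ j ∈ I,
    ¬ (A.idxOf i < A.idxOf j ∧ B.idxOf (G.φ j) < B.idxOf (G.φ i))

/-- The subtanglegram of `G` induced by `I` is planar. -/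
def SubPlanar {n : ℕ} (G : Tanglegram n) (I : Finset ℕ) : Prop :=
  ∃ A B, IsPlanarSubLayout G I A B

/-- The layout `(X, Y)` of `G` restricts (deleting the leaves not indexed by `I`,
resp. `φ(I)`) to a planar layout of the subtanglegram induced by `I`. -/
def RestrictsToPlanarSub {n : ℕ} (G : Tanglegram n) (I : Finset ℕ) (X Y : List ℕ) :
    Prop :=
  IsPlanarSubLayout G I (X.filter fun a => decide (a ∈ I))
    (Y.filter fun b => decide (b ∈ I.image G.φ))

/-- The vertex of the tree `t` with leaf set `c` is an internal vertex of the subtree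
induced by `I` : both of its children have leaf descendants indexed by `I` (so it is
neither suppressed nor outside the minimal subtree). -/
def SurvivesInternal (t : BTree) (I : Finset ℕ) (c : Finset ℕ) : Prop :=
  ∃ c₁ c₂, t.NodeClades c c₁ c₂ ∧ (c₁ ∩ I).Nonempty ∧ (c₂ ∩ I).Nonempty

/-- `(cu, cv)` is a member of `L(I)`, the set of leaf-matched pairs of the
subtanglegram induced by `I` : the pair is recorded by the full leaf sets in `T`, `S`
of the two vertices, which are internal vertices of the induced subtrees whose leaf
sets within the subtanglegram are matched by `φ`. -/
def MemLI {n : ℕ} (G : Tanglegram n) (I : Finset ℕ) (cu cv : Finset ℕ) : Prop :=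
  SurvivesInternal G.T I cu ∧ SurvivesInternal G.S (I.image G.φ) cv ∧
    (cu ∩ I).image G.φ = cv ∩ I.image G.φ

/-! ## Partial layouts

A partial layout is a pair of lists of vertices of `T` and `S` (a vertex being
identified with the subtree rooted at it), obtained from `([root T], [root S])` by
repeatedly replacing a vertex with its two children in one of the two possible
orders. -/

/-- `X'` is obtained from `X` by replacing one internal vertex by its two children,
in one of the two possible orders. -/
def ReplaceStep (X X' : List BTree) : Prop :=
  ∃ (x₁ x₂ : List BTree) (l r : BTree),
    X = x₁ ++ [BTree.node l r] ++ x₂ ∧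
      (X' = x₁ ++ [l, r] ++ x₂ ∨ X' = x₁ ++ [r, l] ++ x₂)

/-- One refinement step on a pair of lists: replace a vertex by its children in one of
the two lists. -/
def PLStep (p q : List BTree × List BTree) : Prop :=
  (ReplaceStep p.1 q.1 ∧ p.2 = q.2) ∨ (p.1 = q.1 ∧ ReplaceStep p.2 q.2)

/-- `p` is a partial layout of the tanglegram `G`. -/
def IsPartialLayout {n : ℕ} (G : Tanglegram n) (p : List BTree × List BTree) : Prop :=
  Relation.ReflTransGen PLStep ([G.T], [G.S]) p

/-- The list of leaf labels determined by a list of vertices. -/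
def labelsOf (X : List BTree) : List ℕ := (X.map BTree.leafList).flatten

/-- Every entry of the list is a leaf. -/
def AllLeaves (X : List BTree) : Prop := ∀ t ∈ X, ∃ i, t = BTree.leaf i

/-- A partial layout is promising if it can be extended, by successively replacing
vertices with their children in some order, to a planar layout of `G`. -/
def Promising {n : ℕ} (G : Tanglegram n) (p : List BTree × List BTree) : Prop :=
  ∃ q, Relation.ReflTransGen PLStep p q ∧ AllLeaves q.1 ∧ AllLeaves q.2 ∧
    IsPlanarLayout G (labelsOf q.1) (labelsOf q.2)

/-- Degree of the vertex `u` of `T` in the bipartite graph `(X, E, Y)` whose edges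
join `u ∈ X` to `v ∈ Y` whenever some leaf descendant of `u` is matched by `φ` with a
leaf descendant of `v`. -/
def degT {n : ℕ} (G : Tanglegram n) (Y : List BTree) (u : BTree) : ℕ :=
  (Y.filter fun v => decide (∃ i ∈ u.leafList, G.φ i ∈ v.leafList)).length

/-- Degree of the vertex `v` of `S` in the bipartite graph `(X, E, Y)`. -/
def degS {n : ℕ} (G : Tanglegram n) (X : List BTree) (v : BTree) : ℕ :=
  (X.filter fun u => decide (∃ i ∈ u.leafList, G.φ i ∈ v.leafList)).length

/-! ### Auxiliary lemmas -/

theorem BTree.leafList_ne_nil : ∀ t : BTree, t.leafList ≠ []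
  | .leaf i => by simp [BTree.leafList]
  | .node l r => by
      simp only [BTree.leafList, ne_eq, List.append_eq_nil_iff]
      exact fun h => (BTree.leafList_ne_nil l h.1).elim

theorem labelsOf_append (A B : List BTree) : labelsOf (A ++ B) = labelsOf A ++ labelsOf B := by
  simp [labelsOf]

theorem labelsOf_singleton (t : BTree) : labelsOf [t] = t.leafList := by
  simp [labelsOf]

theorem labelsOf_cons (t : BTree) (A : List BTree) :
    labelsOf (t :: A) = t.leafList ++ labelsOf A := by
  simp [labelsOf]

theorem mem_labelsOf {a : ℕ} {L : List BTree} : a ∈ labelsOf L ↔ ∃ t ∈ L, a ∈ t.leafList := by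
  simp [labelsOf]

theorem labelsOf_reverse {L : List BTree} (h : AllLeaves L) :
    labelsOf L.reverse = (labelsOf L).reverse := by
  induction L with
  | nil => simp [labelsOf]
  | cons t L ih =>
    obtain ⟨i, rfl⟩ := h t (by simp)
    have ih' := ih (fun s hs => h s (by simp [hs]))
    simp only [List.reverse_cons, labelsOf_append, ih', labelsOf_singleton, BTree.leafList]
    simp [labelsOf, BTree.leafList]

theorem ReplaceStep.perm {A B : List BTree} (h : ReplaceStep A B) :
    (labelsOf A).Perm (labelsOf B) := by
  obtain ⟨x₁, x₂, l, r, hA, hB⟩ := h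
  subst hA
  rcases hB with rfl | rfl
  · simp [labelsOf_append, labelsOf, BTree.leafList]
  · have e1 : labelsOf (x₁ ++ [BTree.node l r] ++ x₂) =
        labelsOf x₁ ++ (l.leafList ++ (r.leafList ++ labelsOf x₂)) := by
      simp [labelsOf_append, labelsOf_singleton, labelsOf_cons, BTree.leafList]
    have e2 : labelsOf (x₁ ++ [r, l] ++ x₂) =
        labelsOf x₁ ++ (r.leafList ++ (l.leafList ++ labelsOf x₂)) := by
      simp [labelsOf_append, labelsOf_cons, labelsOf_singleton, BTree.leafList, labelsOf]
    rw [e1, e2]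
    exact List.Perm.append_left _ (List.perm_append_comm_assoc _ _ _)

theorem rtg_perm {A B : List BTree} (h : Relation.ReflTransGen ReplaceStep A B) :
    (labelsOf A).Perm (labelsOf B) := by
  induction h with
  | refl => exact List.Perm.refl _
  | tail _ hstep ih => exact ih.trans hstep.perm

theorem ReplaceStep.congr {A A' : List BTree} (C D : List BTree) (h : ReplaceStep A A') :
    ReplaceStep (C ++ A ++ D) (C ++ A' ++ D) := by
  obtain ⟨x₁, x₂, l, r, hA, hB⟩ := h
  refine ⟨C ++ x₁, x₂ ++ D, l, r, by simp [hA], ?_⟩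
  rcases hB with rfl | rfl
  · exact Or.inl (by simp)
  · exact Or.inr (by simp)

theorem rtg_congr {A A' : List BTree} (C D : List BTree)
    (h : Relation.ReflTransGen ReplaceStep A A') :
    Relation.ReflTransGen ReplaceStep (C ++ A ++ D) (C ++ A' ++ D) := by
  induction h with
  | refl => exact Relation.ReflTransGen.refl
  | tail _ hstep ih => exact ih.tail (hstep.congr C D)

theorem rtg_append {A A' B B' : List BTree}
    (hA : Relation.ReflTransGen ReplaceStep A A')
    (hB : Relation.ReflTransGen ReplaceStep B B') :
    Relation.ReflTransGen ReplaceStep (A ++ B) (A' ++ B') := by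
  have h1 : Relation.ReflTransGen ReplaceStep (A ++ B) (A' ++ B) := by
    simpa using rtg_congr ([] : List BTree) B hA
  have h2 : Relation.ReflTransGen ReplaceStep (A' ++ B) (A' ++ B') := by
    simpa using rtg_congr A' ([] : List BTree) hB
  exact h1.trans h2

theorem rtg_decomp {A B C : List BTree}
    (h : Relation.ReflTransGen ReplaceStep (A ++ B) C) :
    ∃ A' B', C = A' ++ B' ∧ Relation.ReflTransGen ReplaceStep A A' ∧
      Relation.ReflTransGen ReplaceStep B B' := by
  induction h with
  | refl => exact ⟨A, B, rfl, Relation.ReflTransGen.refl, Relation.ReflTransGen.refl⟩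
  | tail _ hstep ih =>
    obtain ⟨A', B', rfl, hA, hB⟩ := ih
    obtain ⟨x₁, x₂, l, r, heq, hor⟩ := hstep
    have heq' : A' ++ B' = x₁ ++ (BTree.node l r :: x₂) := by simpa using heq
    rcases List.append_eq_append_iff.1 heq' with ⟨a', ha1, ha2⟩ | ⟨c', hc1, hc2⟩
    · -- node inside B' : x₁ = A' ++ a', B' = a' ++ node :: x₂
      have hstepB : ∀ m, m = a' ++ [l, r] ++ x₂ ∨ m = a' ++ [r, l] ++ x₂ →
          Relation.ReflTransGen ReplaceStep B m :=
        fun m hm => hB.tail ⟨a', x₂, l, r, by simp [ha2], hm⟩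
      rcases hor with rfl | rfl
      · exact ⟨A', a' ++ [l, r] ++ x₂, by simp [ha1], hA, hstepB _ (Or.inl rfl)⟩
      · exact ⟨A', a' ++ [r, l] ++ x₂, by simp [ha1], hA, hstepB _ (Or.inr rfl)⟩
    · cases c' with
      | nil =>
        have hB' : B' = BTree.node l r :: x₂ := by simpa using hc2.symm
        have hx₁ : A' = x₁ := by simpa using hc1
        have hstepB : ∀ m, m = [] ++ [l, r] ++ x₂ ∨ m = [] ++ [r, l] ++ x₂ →
            Relation.ReflTransGen ReplaceStep B m :=
          fun m hm => hB.tail ⟨[], x₂, l, r, by simp [hB'], hm⟩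
        rcases hor with rfl | rfl
        · exact ⟨A', [l, r] ++ x₂, by simp [hx₁], hA, by simpa using hstepB _ (Or.inl rfl)⟩
        · exact ⟨A', [r, l] ++ x₂, by simp [hx₁], hA, by simpa using hstepB _ (Or.inr rfl)⟩
      | cons hd tl =>
        have hhd : hd = BTree.node l r ∧ x₂ = tl ++ B' := by
          have := hc2
          simp only [List.cons_append] at this
          exact ⟨(List.cons.injEq _ _ _ _ ▸ this).1.symm, (List.cons.injEq _ _ _ _ ▸ this).2⟩
        obtain ⟨rfl, rfl⟩ := hhd
        have hstepA : ∀ m, m = x₁ ++ [l, r] ++ tl ∨ m = x₁ ++ [r, l] ++ tl →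
            Relation.ReflTransGen ReplaceStep A m :=
          fun m hm => hA.tail ⟨x₁, tl, l, r, by simp [hc1], hm⟩
        rcases hor with rfl | rfl
        · exact ⟨x₁ ++ [l, r] ++ tl, B', by simp, hstepA _ (Or.inl rfl), hB⟩
        · exact ⟨x₁ ++ [r, l] ++ tl, B', by simp, hstepA _ (Or.inr rfl), hB⟩

theorem rtg_single {t : BTree} {C : List BTree}
    (h : Relation.ReflTransGen ReplaceStep [t] C) :
    C = [t] ∨ ∃ l r Cl Cr, t = BTree.node l r ∧
      Relation.ReflTransGen ReplaceStep [l] Cl ∧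
      Relation.ReflTransGen ReplaceStep [r] Cr ∧ (C = Cl ++ Cr ∨ C = Cr ++ Cl) := by
  rcases Relation.ReflTransGen.cases_head h with rfl | ⟨c, hstep, hrest⟩
  · exact Or.inl rfl
  · right
    obtain ⟨x₁, x₂, l, r, heq, hor⟩ := hstep
    have hlen := congrArg List.length heq
    simp only [List.length_append, List.length_cons, List.length_singleton,
      List.length_nil] at hlen
    have hx₁ : x₁ = [] := List.length_eq_zero_iff.1 (by omega)
    have hx₂ : x₂ = [] := List.length_eq_zero_iff.1 (by omega)
    subst hx₁ hx₂
    have ht : t = BTree.node l r := by simpa using heq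
    rcases hor with rfl | rfl
    · simp only [List.nil_append, List.append_nil] at hrest
      obtain ⟨Cl, Cr, rfl, hl, hr⟩ := rtg_decomp (A := [l]) (B := [r]) (by simpa using hrest)
      exact ⟨l, r, Cl, Cr, ht, hl, hr, Or.inl rfl⟩
    · simp only [List.nil_append, List.append_nil] at hrest
      obtain ⟨Cr, Cl, rfl, hr, hl⟩ := rtg_decomp (A := [r]) (B := [l]) (by simpa using hrest)
      exact ⟨l, r, Cl, Cr, ht, hl, hr, Or.inr rfl⟩

theorem rtg_reverse : ∀ (t : BTree) {C : List BTree},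
    Relation.ReflTransGen ReplaceStep [t] C →
    Relation.ReflTransGen ReplaceStep [t] C.reverse
  | t, C, h => by
    rcases rtg_single h with rfl | ⟨l, r, Cl, Cr, rfl, hl, hr, hor⟩
    · simpa using Relation.ReflTransGen.refl
    · have hl' := rtg_reverse l hl
      have hr' := rtg_reverse r hr
      have step1 : ReplaceStep [BTree.node l r] [l, r] :=
        ⟨[], [], l, r, by simp, Or.inl (by simp)⟩
      have step2 : ReplaceStep [BTree.node l r] [r, l] :=
        ⟨[], [], l, r, by simp, Or.inr (by simp)⟩
      rcases hor with rfl | rfl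
      · rw [List.reverse_append]
        exact (Relation.ReflTransGen.single step2).trans
          (by simpa using rtg_append hr' hl')
      · rw [List.reverse_append]
        exact (Relation.ReflTransGen.single step1).trans
          (by simpa using rtg_append hl' hr')

theorem ConsecIn.append_right {A : List ℕ} {s : Finset ℕ} (B : List ℕ) (h : ConsecIn A s) :
    ConsecIn (A ++ B) s := by
  obtain ⟨l, m, r, rfl, hm⟩ := h
  exact ⟨l, m, r ++ B, by simp, hm⟩

theorem ConsecIn.append_left {A : List ℕ} {s : Finset ℕ} (B : List ℕ) (h : ConsecIn A s) :
    ConsecIn (B ++ A) s := by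
  obtain ⟨l, m, r, rfl, hm⟩ := h
  exact ⟨B ++ l, m, r, by simp, hm⟩

theorem clade_consec_leafList : ∀ {t : BTree} {c : Finset ℕ}, t.Clade c →
    ConsecIn t.leafList c := by
  intro t
  induction t with
  | leaf i =>
    intro c hc
    have hc' : c = {i} := hc
    exact ⟨[], [i], [], rfl, by simp [hc']⟩
  | node l r ihl ihr =>
    intro c hc
    rcases hc with rfl | hc | hc
    · refine ⟨[], (BTree.node l r).leafList, [], by simp, ?_⟩
      intro a
      simp [BTree.leaves, List.mem_toFinset]
    · exact (ihl hc).append_right _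
    · exact (ihr hc).append_left _

theorem rtg_clade_consec : ∀ (t : BTree) {C : List BTree},
    Relation.ReflTransGen ReplaceStep [t] C → ∀ {c : Finset ℕ}, t.Clade c →
    ConsecIn (labelsOf C) c
  | t, C, h, c, hc => by
    have hperm : (labelsOf C).Perm t.leafList := by
      have := rtg_perm h
      rw [labelsOf_singleton] at this
      exact this.symm
    rcases rtg_single h with rfl | ⟨l, r, Cl, Cr, rfl, hl, hr, hor⟩
    · rw [labelsOf_singleton]
      exact clade_consec_leafList hc
    · rcases hc with rfl | hc | hc
      · refine ⟨[], labelsOf C, [], by simp, ?_⟩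
        intro a
        rw [hperm.mem_iff]
        simp [BTree.leaves, List.mem_toFinset]
      · rcases hor with rfl | rfl
        · rw [labelsOf_append]
          exact (rtg_clade_consec l hl hc).append_right _
        · rw [labelsOf_append]
          exact (rtg_clade_consec l hl hc).append_left _
      · rcases hor with rfl | rfl
        · rw [labelsOf_append]
          exact (rtg_clade_consec r hr hc).append_left _
        · rw [labelsOf_append]
          exact (rtg_clade_consec r hr hc).append_right _

theorem pl_proj {p q : List BTree × List BTree} (h : Relation.ReflTransGen PLStep p q) :
    Relation.ReflTransGen ReplaceStep p.1 q.1 ∧ Relation.ReflTransGen ReplaceStep p.2 q.2 := by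
  induction h with
  | refl => exact ⟨Relation.ReflTransGen.refl, Relation.ReflTransGen.refl⟩
  | tail _ hstep ih =>
    rcases hstep with ⟨h1, h2⟩ | ⟨h1, h2⟩
    · exact ⟨ih.1.tail h1, h2 ▸ ih.2⟩
    · exact ⟨h1 ▸ ih.1, ih.2.tail h2⟩

theorem rtg_fst {A A' B : List BTree} (h : Relation.ReflTransGen ReplaceStep A A') :
    Relation.ReflTransGen PLStep (A, B) (A', B) := by
  induction h with
  | refl => exact Relation.ReflTransGen.refl
  | tail _ hstep ih => exact ih.tail (Or.inl ⟨hstep, rfl⟩)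

theorem rtg_snd {A B B' : List BTree} (h : Relation.ReflTransGen ReplaceStep B B') :
    Relation.ReflTransGen PLStep (A, B) (A, B') := by
  induction h with
  | refl => exact Relation.ReflTransGen.refl
  | tail _ hstep ih => exact ih.tail (Or.inr ⟨rfl, hstep⟩)

theorem pl_of_rtg {p q : List BTree × List BTree}
    (h1 : Relation.ReflTransGen ReplaceStep p.1 q.1)
    (h2 : Relation.ReflTransGen ReplaceStep p.2 q.2) :
    Relation.ReflTransGen PLStep p q := by
  have := (rtg_fst (B := p.2) h1).trans (rtg_snd (A := q.1) h2)
  simpa using this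

theorem labels_perm {n : ℕ} (G : Tanglegram n) {p : List BTree × List BTree}
    (h : IsPartialLayout G p) :
    (labelsOf p.1).Perm G.T.leafList ∧ (labelsOf p.2).Perm G.S.leafList := by
  obtain ⟨h1, h2⟩ := pl_proj h
  constructor
  · have := rtg_perm h1; rw [labelsOf_singleton] at this; exact this.symm
  · have := rtg_perm h2; rw [labelsOf_singleton] at this; exact this.symm

theorem layout_of_partial {n : ℕ} (G : Tanglegram n) {p : List BTree × List BTree}
    (h : IsPartialLayout G p) :
    IsLayout G (labelsOf p.1) (labelsOf p.2) := by
  obtain ⟨h1, h2⟩ := pl_proj h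
  exact ⟨(labels_perm G h).1, (labels_perm G h).2,
    fun s hs => rtg_clade_consec _ h1 hs, fun s hs => rtg_clade_consec _ h2 hs⟩

/-! ### indexOf lemmas -/

theorem idx_lt_block {P Q : List ℕ} {a b : ℕ} (h : (P ++ Q).Nodup) (ha : a ∈ P) (hb : b ∈ Q) :
    (P ++ Q).idxOf a < (P ++ Q).idxOf b := by
  have hbP : b ∉ P := fun hbP => (List.disjoint_of_nodup_append h) hbP hb
  rw [List.idxOf_append_of_mem ha, List.idxOf_append_of_notMem hbP]
  have := List.idxOf_lt_length_iff.2 ha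
  omega

theorem idx_reverse : ∀ {M : List ℕ}, M.Nodup → ∀ {a : ℕ}, a ∈ M →
    M.reverse.idxOf a = M.length - 1 - M.idxOf a := by
  intro M
  induction M with
  | nil => simp
  | cons x M ih =>
    intro hnd a ha
    rcases List.mem_cons.1 ha with rfl | ha
    · have hx : a ∉ M := (List.nodup_cons.1 hnd).1
      have hx' : a ∉ M.reverse := by simpa using hx
      rw [List.reverse_cons, List.idxOf_append_of_notMem hx']
      simp
    · have hne : a ≠ x := fun h => (List.nodup_cons.1 hnd).1 (h ▸ ha)
      have hmem : a ∈ M.reverse := by simpa using ha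
      have hlt := List.idxOf_lt_length_iff.2 ha
      rw [List.reverse_cons, List.idxOf_append_of_mem hmem,
        ih (List.nodup_cons.1 hnd).2 ha, List.idxOf_cons_ne _ hne.symm]
      simp only [List.length_cons, Nat.succ_eq_add_one]
      omega

theorem idx_rev_block {P M Q : List ℕ} (h : (P ++ M ++ Q).Nodup) {i j : ℕ}
    (hi : i ∈ M) (hj : j ∈ M) :
    ((P ++ M.reverse ++ Q).idxOf i < (P ++ M.reverse ++ Q).idxOf j ↔
      (P ++ M ++ Q).idxOf j < (P ++ M ++ Q).idxOf i) := by
  have hMnd : M.Nodup := (h.of_append_left).of_append_right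
  have hnotP : ∀ a ∈ M, a ∉ P := fun a haM haP =>
    (List.disjoint_of_nodup_append h.of_append_left) haP haM
  have e : ∀ a ∈ M, (P ++ M.reverse ++ Q).idxOf a = P.length + M.reverse.idxOf a := by
    intro a haM
    rw [List.append_assoc, List.idxOf_append_of_notMem (hnotP a haM),
      List.idxOf_append_of_mem (by simpa using haM)]
  have e' : ∀ a ∈ M, (P ++ M ++ Q).idxOf a = P.length + M.idxOf a := by
    intro a haM
    rw [List.append_assoc, List.idxOf_append_of_notMem (hnotP a haM),
      List.idxOf_append_of_mem haM]
  rw [e i hi, e j hj, e' i hi, e' j hj, idx_reverse hMnd hi, idx_reverse hMnd hj]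
  have h1 := List.idxOf_lt_length_iff.2 hi
  have h2 := List.idxOf_lt_length_iff.2 hj
  by_cases hij : i = j
  · subst hij; omega
  · have hne : M.idxOf i ≠ M.idxOf j := fun h' => hij ((List.idxOf_inj hi).1 h')
    omega

theorem idx_rev_stable {P M Q : List ℕ} {i : ℕ} (hiM : i ∉ M) (hi : i ∈ P ++ M ++ Q) :
    (P ++ M.reverse ++ Q).idxOf i = (P ++ M ++ Q).idxOf i := by
  have hiM' : i ∉ M.reverse := by simpa using hiM
  by_cases hiP : i ∈ P
  · rw [List.append_assoc, List.append_assoc, List.idxOf_append_of_mem hiP,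
      List.idxOf_append_of_mem hiP]
  · rw [List.append_assoc, List.append_assoc, List.idxOf_append_of_notMem hiP,
      List.idxOf_append_of_notMem hiP, List.idxOf_append_of_notMem hiM',
      List.idxOf_append_of_notMem hiM, List.length_reverse]

theorem perm_rev_mid {P M Q : List ℕ} : (P ++ M ++ Q).Perm (P ++ M.reverse ++ Q) :=
  List.Perm.append (List.Perm.append (List.Perm.refl P) M.reverse_perm.symm) (List.Perm.refl Q)

theorem idx_rev_mixed₁ {P M Q : List ℕ} (h : (P ++ M ++ Q).Nodup) {i j : ℕ}
    (hi : i ∈ M) (hj : j ∈ P ++ M ++ Q) (hjM : j ∉ M)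
    (hlt : (P ++ M.reverse ++ Q).idxOf i < (P ++ M.reverse ++ Q).idxOf j) :
    (P ++ M ++ Q).idxOf i < (P ++ M ++ Q).idxOf j := by
  have h' : (P ++ M.reverse ++ Q).Nodup := perm_rev_mid.nodup h
  have hjPQ : j ∈ P ∨ j ∈ Q := by
    rcases List.mem_append.1 hj with hj' | hj'
    · rcases List.mem_append.1 hj' with hj'' | hj''
      · exact Or.inl hj''
      · exact absurd hj'' hjM
    · exact Or.inr hj'
  rcases hjPQ with hjP | hjQ
  · exfalso
    have : (P ++ (M.reverse ++ Q)).idxOf j < (P ++ (M.reverse ++ Q)).idxOf i := by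
      refine idx_lt_block (by rw [← List.append_assoc]; exact h') hjP ?_
      exact List.mem_append.2 (Or.inl (by simpa using hi))
    rw [← List.append_assoc] at this
    omega
  · exact idx_lt_block h (List.mem_append.2 (Or.inr hi)) hjQ

theorem idx_rev_mixed₂ {P M Q : List ℕ} (h : (P ++ M ++ Q).Nodup) {i j : ℕ}
    (hj : j ∈ M) (hi : i ∈ P ++ M ++ Q) (hiM : i ∉ M)
    (hlt : (P ++ M.reverse ++ Q).idxOf i < (P ++ M.reverse ++ Q).idxOf j) :
    (P ++ M ++ Q).idxOf i < (P ++ M ++ Q).idxOf j := by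
  have h' : (P ++ M.reverse ++ Q).Nodup := perm_rev_mid.nodup h
  have hiPQ : i ∈ P ∨ i ∈ Q := by
    rcases List.mem_append.1 hi with hi' | hi'
    · rcases List.mem_append.1 hi' with hi'' | hi''
      · exact Or.inl hi''
      · exact absurd hi'' hiM
    · exact Or.inr hi'
  rcases hiPQ with hiP | hiQ
  · have hgoal : (P ++ (M ++ Q)).idxOf i < (P ++ (M ++ Q)).idxOf j := by
      refine idx_lt_block (by rw [← List.append_assoc]; exact h) hiP
        (List.mem_append.2 (Or.inl hj))
    rw [← List.append_assoc] at hgoal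
    exact hgoal
  · exfalso
    have : (P ++ M.reverse ++ Q).idxOf j < (P ++ M.reverse ++ Q).idxOf i := by
      refine idx_lt_block h' ?_ hiQ
      exact List.mem_append.2 (Or.inr (by simpa using hj))
    omega

/-! ### Tanglegram helpers -/

theorem phi_lt {n : ℕ} (G : Tanglegram n) {i : ℕ} (hi : i < n) : G.φ i < n := by
  by_contra h
  push_neg at h
  have h1 := G.hφ _ h
  have h2 := G.φ.injective h1
  omega

theorem phi_inv_lt {n : ℕ} (G : Tanglegram n) {z : ℕ} (hz : z < n) : G.φ.symm z < n := by
  by_contra h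
  push_neg at h
  have h1 := G.hφ _ h
  rw [Equiv.apply_symm_apply] at h1
  omega

theorem exists_of_filter_pos {α : Type*} {p : α → Bool} {L : List α}
    (h : 0 < (L.filter p).length) :
    ∃ s t a, L = s ++ a :: t ∧ p a := by
  obtain ⟨a, ha⟩ := List.exists_mem_of_length_pos h
  have haL := List.mem_of_mem_filter ha
  have hpa := List.of_mem_filter ha
  obtain ⟨s, t, rfl⟩ := List.append_of_mem haL
  exact ⟨s, t, a, rfl, hpa⟩

theorem exists_two_of_filter {α : Type*} {p : α → Bool} {L : List α}
    (h : 2 ≤ (L.filter p).length) :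
    ∃ y₁ v y₂ v' y₃, L = y₁ ++ v :: (y₂ ++ v' :: y₃) ∧ p v ∧ p v' := by
  induction L with
  | nil => simp at h
  | cons a L ih =>
    by_cases hpa : p a
    · rw [List.filter_cons_of_pos hpa] at h
      have h1 : 0 < (L.filter p).length := by
        simp only [List.length_cons] at h; omega
      obtain ⟨s, t, b, rfl, hpb⟩ := exists_of_filter_pos h1
      exact ⟨[], a, s, b, t, by simp, hpa, hpb⟩
    · rw [List.filter_cons_of_neg (by simpa using hpa)] at h
      obtain ⟨y₁, v, y₂, v', y₃, rfl, h1, h2⟩ := ih h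
      exact ⟨a :: y₁, v, y₂, v', y₃, by simp, h1, h2⟩

theorem two_le_filter {α : Type*} {p : α → Bool} {L : List α} {a b : α}
    (ha : a ∈ L) (hb : b ∈ L) (hab : a ≠ b) (hpa : p a) (hpb : p b) :
    2 ≤ (L.filter p).length := by
  have ha' : a ∈ L.filter p := List.mem_filter.2 ⟨ha, hpa⟩
  have hb' : b ∈ L.filter p := List.mem_filter.2 ⟨hb, hpb⟩
  obtain ⟨s, t, heq⟩ := List.append_of_mem ha'
  rw [heq] at hb' ⊢
  have hb'' : b ∈ s ++ t := by
    rcases List.mem_append.1 hb' with h | h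
    · exact List.mem_append.2 (Or.inl h)
    · rcases List.mem_cons.1 h with rfl | h
      · exact absurd rfl hab.symm
      · exact List.mem_append.2 (Or.inr h)
  have hpos : 0 < (s ++ t).length := List.length_pos_iff.2 (List.ne_nil_of_mem hb'')
  simp only [List.length_append, List.length_cons] at hpos ⊢
  omega

/-- The key crossing lemma : if the partial layout with `a` before `b` is promising,
then no leaf of `a` can match into a later vertex of `Y` while a leaf of `b` matches
into an earlier one. -/
theorem key {n : ℕ} (G : Tanglegram n) {x₁ x₂ : List BTree} {a b : BTree}
    {y₁ y₂ y₃ : List BTree} {w w' : BTree}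
    (hprom : Promising G (x₁ ++ [a, b] ++ x₂, y₁ ++ w :: (y₂ ++ w' :: y₃)))
    {j k : ℕ} (hj : j ∈ a.leafList) (hk : k ∈ b.leafList)
    (hφk : G.φ k ∈ w.leafList) (hφj : G.φ j ∈ w'.leafList) : False := by
  obtain ⟨q, hpath, hal1, hal2, hplan⟩ := hprom
  obtain ⟨h1, h2⟩ := pl_proj hpath
  replace h1 : Relation.ReflTransGen ReplaceStep (x₁ ++ [a, b] ++ x₂) q.1 := h1
  replace h2 : Relation.ReflTransGen ReplaceStep (y₁ ++ w :: (y₂ ++ w' :: y₃)) q.2 := h2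
  rw [show x₁ ++ [a, b] ++ x₂ = (x₁ ++ [a]) ++ ([b] ++ x₂) by simp] at h1
  rw [show y₁ ++ w :: (y₂ ++ w' :: y₃) = (y₁ ++ [w]) ++ ((y₂ ++ [w']) ++ y₃) by simp] at h2
  obtain ⟨C, D, hq1, hC, hD⟩ := rtg_decomp h1
  obtain ⟨A₁, Ua, rfl, hA₁, hUa⟩ := rtg_decomp hC
  obtain ⟨Ub, A₂, rfl, hUb, hA₂⟩ := rtg_decomp hD
  obtain ⟨E, B₃, hq2, hE, hB₃⟩ := rtg_decomp h2
  obtain ⟨B₁, W, rfl, hB₁, hW⟩ := rtg_decomp hE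
  obtain ⟨F, B₃', hFeq, hF, hB₃'⟩ := rtg_decomp hB₃
  obtain ⟨B₂, W', rfl, hB₂, hW'⟩ := rtg_decomp hF
  -- label membership
  have hjUa : j ∈ labelsOf Ua := by
    have := rtg_perm hUa; rw [labelsOf_singleton] at this; exact this.mem_iff.1 hj
  have hkUb : k ∈ labelsOf Ub := by
    have := rtg_perm hUb; rw [labelsOf_singleton] at this; exact this.mem_iff.1 hk
  have hφkW : G.φ k ∈ labelsOf W := by
    have := rtg_perm hW; rw [labelsOf_singleton] at this; exact this.mem_iff.1 hφk
  have hφjW' : G.φ j ∈ labelsOf W' := by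
    have := rtg_perm hW'; rw [labelsOf_singleton] at this; exact this.mem_iff.1 hφj
  -- label lists
  have eX : labelsOf q.1 = (labelsOf A₁ ++ labelsOf Ua) ++ (labelsOf Ub ++ labelsOf A₂) := by
    rw [hq1]; simp [labelsOf_append]
  have eY : labelsOf q.2 = (labelsOf B₁ ++ labelsOf W) ++
      ((labelsOf B₂ ++ labelsOf W') ++ labelsOf B₃') := by
    rw [hq2, hFeq]; simp [labelsOf_append]
  have hndX : (labelsOf q.1).Nodup := hplan.1.1.nodup_iff.2 G.hT.1
  have hndY : (labelsOf q.2).Nodup := hplan.1.2.1.nodup_iff.2 G.hS.1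
  have hjn : j < n := by
    have hjT : j ∈ G.T.leafList := hplan.1.1.subset (by
      rw [eX]; exact List.mem_append.2 (Or.inl (List.mem_append.2 (Or.inr hjUa))))
    exact (G.hT.2 j).1 hjT
  have hkn : k < n := by
    have hkT : k ∈ G.T.leafList := hplan.1.1.subset (by
      rw [eX]; exact List.mem_append.2 (Or.inr (List.mem_append.2 (Or.inl hkUb))))
    exact (G.hT.2 k).1 hkT
  have hXidx : (labelsOf q.1).idxOf j < (labelsOf q.1).idxOf k := by
    rw [eX]
    exact idx_lt_block (by rw [← eX]; exact hndX)
      (List.mem_append.2 (Or.inr hjUa)) (List.mem_append.2 (Or.inl hkUb))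
  have hYidx : (labelsOf q.2).idxOf (G.φ k) < (labelsOf q.2).idxOf (G.φ j) := by
    rw [eY]
    exact idx_lt_block (by rw [← eY]; exact hndY)
      (List.mem_append.2 (Or.inr hφkW))
      (List.mem_append.2 (Or.inl (List.mem_append.2 (Or.inr hφjW'))))
  exact hplan.2 j k ⟨hjn, hkn, hXidx, hYidx⟩

theorem key2 {n : ℕ} (G : Tanglegram n) {x₁ x₂ : List BTree} {a b : BTree}
    {Y P Q : List BTree} {w w' : BTree}
    (hprom : Promising G (x₁ ++ [a, b] ++ x₂, Y))
    (hY : Y = P ++ w :: Q) (hw' : w' ∈ Q)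
    {j k : ℕ} (hj : j ∈ a.leafList) (hk : k ∈ b.leafList)
    (hφk : G.φ k ∈ w.leafList) (hφj : G.φ j ∈ w'.leafList) : False := by
  obtain ⟨s, t, rfl⟩ := List.append_of_mem hw'
  rw [hY] at hprom
  exact key G hprom hj hk hφk hφj

/-- The mirror lemma : if all leaves of `a` and `b` are matched exactly onto the
leaves of the vertex `v` of `Y`, then flipping the order of `a` and `b` preserves
promise. -/
theorem mirror {n : ℕ} (G : Tanglegram n) {x₁ x₂ : List BTree} {a b v : BTree}
    {y₁ y₂ : List BTree}
    (hpart' : IsPartialLayout G (x₁ ++ [b, a] ++ x₂, y₁ ++ v :: y₂))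
    (hab : ∀ i : ℕ, i ∈ a.leafList ∨ i ∈ b.leafList → G.φ i ∈ v.leafList)
    (hba : ∀ z ∈ v.leafList, ∃ i, (i ∈ a.leafList ∨ i ∈ b.leafList) ∧ G.φ i = z)
    (hprom : Promising G (x₁ ++ [a, b] ++ x₂, y₁ ++ v :: y₂)) :
    Promising G (x₁ ++ [b, a] ++ x₂, y₁ ++ v :: y₂) := by
  obtain ⟨q, hpath, hal1, hal2, hplan⟩ := hprom
  obtain ⟨h1, h2⟩ := pl_proj hpath
  replace h1 : Relation.ReflTransGen ReplaceStep (x₁ ++ [a, b] ++ x₂) q.1 := h1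
  replace h2 : Relation.ReflTransGen ReplaceStep (y₁ ++ v :: y₂) q.2 := h2
  rw [show x₁ ++ [a, b] ++ x₂ = (x₁ ++ [a]) ++ ([b] ++ x₂) by simp] at h1
  rw [show y₁ ++ v :: y₂ = (y₁ ++ [v]) ++ y₂ by simp] at h2
  obtain ⟨C, D, hq1, hC, hD⟩ := rtg_decomp h1
  obtain ⟨A₁, Ua, rfl, hA₁, hUa⟩ := rtg_decomp hC
  obtain ⟨Ub, A₂, rfl, hUb, hA₂⟩ := rtg_decomp hD
  obtain ⟨E, B₂, hq2, hE, hB₂⟩ := rtg_decomp h2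
  obtain ⟨B₁, V, rfl, hB₁, hV⟩ := rtg_decomp hE
  -- the mirrored full layout
  set q' : List BTree × List BTree :=
    (A₁ ++ Ub.reverse ++ Ua.reverse ++ A₂, B₁ ++ V.reverse ++ B₂) with hq'
  -- all entries of q' are entries of q
  have hmem1 : ∀ t, t ∈ q'.1 → t ∈ q.1 := by
    intro t ht
    rw [hq1]
    simp only [hq', List.mem_append, List.mem_reverse] at ht ⊢
    tauto
  have hmem2 : ∀ t, t ∈ q'.2 → t ∈ q.2 := by
    intro t ht
    rw [hq2]
    simp only [hq', List.mem_append, List.mem_reverse] at ht ⊢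
    tauto
  have hal1' : AllLeaves q'.1 := fun t ht => hal1 t (hmem1 t ht)
  have hal2' : AllLeaves q'.2 := fun t ht => hal2 t (hmem2 t ht)
  have halUa : AllLeaves Ua := fun t ht => hal1 t (by rw [hq1]; simp [ht])
  have halUb : AllLeaves Ub := fun t ht => hal1 t (by rw [hq1]; simp [ht])
  have halV : AllLeaves V := fun t ht => hal2 t (by rw [hq2]; simp [ht])
  -- the refinement path to q'
  have hpath1 : Relation.ReflTransGen ReplaceStep (x₁ ++ [b, a] ++ x₂) q'.1 := by
    have h := rtg_append (rtg_append hA₁ (rtg_reverse b hUb))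
      (rtg_append (rtg_reverse a hUa) hA₂)
    have e1 : (x₁ ++ [b]) ++ ([a] ++ x₂) = x₁ ++ [b, a] ++ x₂ := by simp
    have e2 : (A₁ ++ Ub.reverse) ++ (Ua.reverse ++ A₂) = q'.1 := by simp [hq']
    rw [e1, e2] at h
    exact h
  have hpath2 : Relation.ReflTransGen ReplaceStep (y₁ ++ v :: y₂) q'.2 := by
    have h := rtg_append (rtg_append hB₁ (rtg_reverse v hV)) hB₂
    have e1 : (y₁ ++ [v]) ++ y₂ = y₁ ++ v :: y₂ := by simp
    have e2 : (B₁ ++ V.reverse) ++ B₂ = q'.2 := by simp [hq']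
    rw [e1, e2] at h
    exact h
  have hpathq' : Relation.ReflTransGen PLStep (x₁ ++ [b, a] ++ x₂, y₁ ++ v :: y₂) q' :=
    pl_of_rtg hpath1 hpath2
  -- label lists
  have lrevUa : labelsOf Ua.reverse = (labelsOf Ua).reverse := labelsOf_reverse halUa
  have lrevUb : labelsOf Ub.reverse = (labelsOf Ub).reverse := labelsOf_reverse halUb
  have lrevV : labelsOf V.reverse = (labelsOf V).reverse := labelsOf_reverse halV
  set Mx : List ℕ := labelsOf Ua ++ labelsOf Ub with hMx
  set My : List ℕ := labelsOf V with hMy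
  have eX : labelsOf q.1 = labelsOf A₁ ++ Mx ++ labelsOf A₂ := by
    rw [hq1]; simp [labelsOf_append, hMx]
  have eX' : labelsOf q'.1 = labelsOf A₁ ++ Mx.reverse ++ labelsOf A₂ := by
    simp only [hq', labelsOf_append, lrevUa, lrevUb, hMx, List.reverse_append]
    simp [List.append_assoc]
  have eY : labelsOf q.2 = labelsOf B₁ ++ My ++ labelsOf B₂ := by
    rw [hq2]; simp [labelsOf_append, hMy]
  have eY' : labelsOf q'.2 = labelsOf B₁ ++ My.reverse ++ labelsOf B₂ := by
    simp only [hq', labelsOf_append, lrevV, hMy]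
  -- nodup
  have hndX : (labelsOf A₁ ++ Mx ++ labelsOf A₂).Nodup := by
    rw [← eX]; exact hplan.1.1.nodup_iff.2 G.hT.1
  have hndY : (labelsOf B₁ ++ My ++ labelsOf B₂).Nodup := by
    rw [← eY]; exact hplan.1.2.1.nodup_iff.2 G.hS.1
  -- membership facts
  have memMx : ∀ i : ℕ, i ∈ Mx ↔ (i ∈ a.leafList ∨ i ∈ b.leafList) := by
    intro i
    have ha := rtg_perm hUa; rw [labelsOf_singleton] at ha
    have hb := rtg_perm hUb; rw [labelsOf_singleton] at hb
    simp only [hMx, List.mem_append]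
    rw [← ha.mem_iff, ← hb.mem_iff]
  have memMy : ∀ z : ℕ, z ∈ My ↔ z ∈ v.leafList := by
    intro z
    have hv := rtg_perm hV; rw [labelsOf_singleton] at hv
    exact hv.symm.mem_iff
  have f1 : ∀ i ∈ Mx, G.φ i ∈ My := fun i hi => (memMy _).2 (hab i ((memMx i).1 hi))
  have f2 : ∀ i : ℕ, i ∉ Mx → G.φ i ∉ My := by
    intro i hiM hc
    obtain ⟨i', hi', hφ⟩ := hba _ ((memMy _).1 hc)
    have : i' = i := G.φ.injective hφ
    exact hiM ((memMx i).2 (this ▸ hi'))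
  -- no crossings in the mirrored layout
  have hnc : ∀ i j, ¬ Crossing G (labelsOf q'.1) (labelsOf q'.2) i j := by
    intro i j hc
    obtain ⟨hin, hjn, hx, hy⟩ := hc
    rw [eX'] at hx
    rw [eY'] at hy
    have hiX : i ∈ labelsOf A₁ ++ Mx ++ labelsOf A₂ := by
      rw [← eX]; exact hplan.1.1.mem_iff.2 ((G.hT.2 i).2 hin)
    have hjX : j ∈ labelsOf A₁ ++ Mx ++ labelsOf A₂ := by
      rw [← eX]; exact hplan.1.1.mem_iff.2 ((G.hT.2 j).2 hjn)
    have hφiY : G.φ i ∈ labelsOf B₁ ++ My ++ labelsOf B₂ := by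
      rw [← eY]; exact hplan.1.2.1.mem_iff.2 ((G.hS.2 _).2 (phi_lt G hin))
    have hφjY : G.φ j ∈ labelsOf B₁ ++ My ++ labelsOf B₂ := by
      rw [← eY]; exact hplan.1.2.1.mem_iff.2 ((G.hS.2 _).2 (phi_lt G hjn))
    by_cases hiM : i ∈ Mx <;> by_cases hjM : j ∈ Mx
    · -- both inside : reversed crossing (j, i)
      have hx' := (idx_rev_block hndX hiM hjM).1 hx
      have hy' := (idx_rev_block hndY (f1 j hjM) (f1 i hiM)).1 hy
      exact hplan.2 j i ⟨hjn, hin, by rw [eX]; exact hx', by rw [eY]; exact hy'⟩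
    · have hx' := idx_rev_mixed₁ hndX hiM hjX hjM hx
      have hy' := idx_rev_mixed₂ hndY (f1 i hiM) hφjY (f2 j hjM) hy
      exact hplan.2 i j ⟨hin, hjn, by rw [eX]; exact hx', by rw [eY]; exact hy'⟩
    · have hx' := idx_rev_mixed₂ hndX hjM hiX hiM hx
      have hy' := idx_rev_mixed₁ hndY (f1 j hjM) hφiY (f2 i hiM) hy
      exact hplan.2 i j ⟨hin, hjn, by rw [eX]; exact hx', by rw [eY]; exact hy'⟩
    · have hx' : (labelsOf A₁ ++ Mx ++ labelsOf A₂).idxOf i <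
          (labelsOf A₁ ++ Mx ++ labelsOf A₂).idxOf j := by
        rw [← idx_rev_stable hiM hiX, ← idx_rev_stable hjM hjX]
        exact hx
      have hy' : (labelsOf B₁ ++ My ++ labelsOf B₂).idxOf (G.φ j) <
          (labelsOf B₁ ++ My ++ labelsOf B₂).idxOf (G.φ i) := by
        rw [← idx_rev_stable (f2 j hjM) hφjY, ← idx_rev_stable (f2 i hiM) hφiY]
        exact hy
      exact hplan.2 i j ⟨hin, hjn, by rw [eX]; exact hx', by rw [eY]; exact hy'⟩
  exact ⟨q', hpathq', hal1', hal2',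
    layout_of_partial G (hpart'.trans hpathq'), hnc⟩

theorem at_least_one {n : ℕ} (G : Tanglegram n) {x₁ x₂ : List BTree} {u₁ u₂ : BTree}
    {Y : List BTree}
    (hprom : Promising G (x₁ ++ [BTree.node u₁ u₂] ++ x₂, Y)) :
    Promising G (x₁ ++ [u₁, u₂] ++ x₂, Y) ∨ Promising G (x₁ ++ [u₂, u₁] ++ x₂, Y) := by
  obtain ⟨q, hpath, hal1, hal2, hplan⟩ := hprom
  obtain ⟨h1, h2⟩ := pl_proj hpath
  replace h1 : Relation.ReflTransGen ReplaceStep (x₁ ++ [BTree.node u₁ u₂] ++ x₂) q.1 := h1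
  replace h2 : Relation.ReflTransGen ReplaceStep Y q.2 := h2
  rw [show x₁ ++ [BTree.node u₁ u₂] ++ x₂ = x₁ ++ ([BTree.node u₁ u₂] ++ x₂) by simp] at h1
  obtain ⟨A₁, D, hq1, hA₁, hD⟩ := rtg_decomp h1
  obtain ⟨U, A₂, hDeq, hU, hA₂⟩ := rtg_decomp hD
  rcases rtg_single hU with rfl | ⟨l, r, Cl, Cr, hlr, hl, hr, hor⟩
  · exfalso
    have hmem : BTree.node u₁ u₂ ∈ q.1 := by rw [hq1, hDeq]; simp
    obtain ⟨i, hi⟩ := hal1 _ hmem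
    exact BTree.noConfusion hi
  · injection hlr with e1 e2
    subst e1; subst e2
    rcases hor with rfl | rfl
    · left
      refine ⟨q, pl_of_rtg ?_ h2, hal1, hal2, hplan⟩
      rw [hq1, hDeq]
      have h := rtg_append hA₁ (rtg_append (rtg_append hl hr) hA₂)
      simpa using h
    · right
      refine ⟨q, pl_of_rtg ?_ h2, hal1, hal2, hplan⟩
      rw [hq1, hDeq]
      have h := rtg_append hA₁ (rtg_append (rtg_append hr hl) hA₂)
      simpa using h
/-- Let `(X, Y)` be a promising partial layout of a planar
tanglegram and let `u = node u₁ u₂ ∈ X` be a vertex of highest degree in the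
bipartite graph `(X, E, Y)`.  (a) If `deg u = 1`, replacing `u` by `u₁ u₂` or by
`u₂ u₁` both give promising partial layouts.  (b) If `deg u > 1`, exactly one of the
two replacements gives a promising partial layout. -/
theorem refine_promising {n : ℕ} (G : Tanglegram n) (hG : IsPlanarTanglegram G)
    (X Y : List BTree) (hPL : IsPartialLayout G (X, Y)) (hprom : Promising G (X, Y))
    (x₁ x₂ : List BTree) (u₁ u₂ : BTree)
    (hX : X = x₁ ++ [BTree.node u₁ u₂] ++ x₂)
    (hmaxT : ∀ w ∈ X, degT G Y w ≤ degT G Y (BTree.node u₁ u₂))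
    (hmaxS : ∀ v ∈ Y, degS G X v ≤ degT G Y (BTree.node u₁ u₂)) :
    (degT G Y (BTree.node u₁ u₂) = 1 →
      Promising G (x₁ ++ [u₁, u₂] ++ x₂, Y) ∧ Promising G (x₁ ++ [u₂, u₁] ++ x₂, Y)) ∧
    (1 < degT G Y (BTree.node u₁ u₂) →
      Xor' (Promising G (x₁ ++ [u₁, u₂] ++ x₂, Y))
        (Promising G (x₁ ++ [u₂, u₁] ++ x₂, Y))) := by
  subst hX
  have hlabX := (labels_perm G hPL).1
  have hlabY := (labels_perm G hPL).2
  have hOr := at_least_one G hprom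
  constructor
  · -- (a) degree 1 : both replacements are promising
    intro hdeg1
    obtain ⟨v, hv⟩ := List.length_eq_one_iff.1
      (show (Y.filter fun w => decide (∃ i ∈ (BTree.node u₁ u₂).leafList,
        G.φ i ∈ w.leafList)).length = 1 from hdeg1)
    have hvfil : v ∈ Y.filter
        (fun w => decide (∃ i ∈ (BTree.node u₁ u₂).leafList, G.φ i ∈ w.leafList)) := by
      rw [hv]; simp
    have hvY : v ∈ Y := List.mem_of_mem_filter hvfil
    have hpv : ∃ i ∈ (BTree.node u₁ u₂).leafList, G.φ i ∈ v.leafList := by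
      have := List.of_mem_filter hvfil
      simpa using this
    have huniq : ∀ w ∈ Y, (∃ i ∈ (BTree.node u₁ u₂).leafList, G.φ i ∈ w.leafList) →
        w = v := by
      intro w hwY hw
      have hwfil : w ∈ Y.filter
          (fun w => decide (∃ i ∈ (BTree.node u₁ u₂).leafList, G.φ i ∈ w.leafList)) :=
        List.mem_filter.2 ⟨hwY, by simpa using hw⟩
      rw [hv] at hwfil
      simpa using hwfil
    have hmemT : ∀ i ∈ (BTree.node u₁ u₂).leafList, i ∈ G.T.leafList := by
      intro i hi
      exact hlabX.subset (mem_labelsOf.2 ⟨BTree.node u₁ u₂, by simp, hi⟩)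
    have claimA : ∀ i : ℕ, i ∈ u₁.leafList ∨ i ∈ u₂.leafList → G.φ i ∈ v.leafList := by
      intro i hi
      have hiu : i ∈ (BTree.node u₁ u₂).leafList := by
        simp only [BTree.leafList, List.mem_append]; exact hi
      have hin : i < n := (G.hT.2 i).1 (hmemT i hiu)
      have hφiY : G.φ i ∈ labelsOf Y := hlabY.mem_iff.2 ((G.hS.2 _).2 (phi_lt G hin))
      obtain ⟨w, hwY, hw⟩ := mem_labelsOf.1 hφiY
      have := huniq w hwY ⟨i, hiu, hw⟩
      exact this ▸ hw
    have claimB : ∀ z ∈ v.leafList,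
        ∃ i, (i ∈ u₁.leafList ∨ i ∈ u₂.leafList) ∧ G.φ i = z := by
      intro z hz
      have hzS : z ∈ G.S.leafList := hlabY.subset (mem_labelsOf.2 ⟨v, hvY, hz⟩)
      have hzn : z < n := (G.hS.2 z).1 hzS
      have hin : G.φ.symm z < n := phi_inv_lt G hzn
      have hφi : G.φ (G.φ.symm z) = z := G.φ.apply_symm_apply z
      have hiT : G.φ.symm z ∈ G.T.leafList := (G.hT.2 _).2 hin
      obtain ⟨w, hwX, hiw⟩ := mem_labelsOf.1 (hlabX.mem_iff.2 hiT)
      by_cases hiu : G.φ.symm z ∈ (BTree.node u₁ u₂).leafList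
      · refine ⟨G.φ.symm z, ?_, hφi⟩
        simpa only [BTree.leafList, List.mem_append] using hiu
      · exfalso
        have hwne : w ≠ BTree.node u₁ u₂ := fun h => hiu (h ▸ hiw)
        have hpw : (fun w' => decide (∃ i' ∈ w'.leafList, G.φ i' ∈ v.leafList)) w
            = true := by
          simp only [decide_eq_true_eq]
          exact ⟨G.φ.symm z, hiw, by rw [hφi]; exact hz⟩
        have hpu : (fun w' => decide (∃ i' ∈ w'.leafList, G.φ i' ∈ v.leafList))
            (BTree.node u₁ u₂) = true := by
          simp only [decide_eq_true_eq]
          exact hpv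
        have huX : BTree.node u₁ u₂ ∈ x₁ ++ [BTree.node u₁ u₂] ++ x₂ := by simp
        have h2le := two_le_filter (p := fun w' => decide (∃ i' ∈ w'.leafList, G.φ i' ∈ v.leafList)) huX hwX hwne.symm hpu hpw
        have hle := hmaxS v hvY
        rw [hdeg1] at hle
        have h2le' : 2 ≤ degS G (x₁ ++ [BTree.node u₁ u₂] ++ x₂) v := h2le
        omega
    have claimA' : ∀ i : ℕ, i ∈ u₂.leafList ∨ i ∈ u₁.leafList → G.φ i ∈ v.leafList :=
      fun i hi => claimA i (Or.symm hi)
    have claimB' : ∀ z ∈ v.leafList,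
        ∃ i, (i ∈ u₂.leafList ∨ i ∈ u₁.leafList) ∧ G.φ i = z := by
      intro z hz
      obtain ⟨i, hor, e⟩ := claimB z hz
      exact ⟨i, Or.symm hor, e⟩
    have hPL12 : IsPartialLayout G (x₁ ++ [u₁, u₂] ++ x₂, Y) :=
      hPL.tail (Or.inl ⟨⟨x₁, x₂, u₁, u₂, rfl, Or.inl rfl⟩, rfl⟩)
    have hPL21 : IsPartialLayout G (x₁ ++ [u₂, u₁] ++ x₂, Y) :=
      hPL.tail (Or.inl ⟨⟨x₁, x₂, u₁, u₂, rfl, Or.inr rfl⟩, rfl⟩)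
    obtain ⟨s, t, hYst⟩ := List.append_of_mem hvY
    rcases hOr with h12 | h21
    · refine ⟨h12, ?_⟩
      rw [hYst] at hPL21 h12 ⊢
      exact mirror G hPL21 claimA claimB h12
    · refine ⟨?_, h21⟩
      rw [hYst] at hPL12 h21 ⊢
      exact mirror G hPL12 claimA' claimB' h21
  · -- (b) degree > 1 : exactly one replacement is promising
    intro hdeg
    have hnb : ¬ (Promising G (x₁ ++ [u₁, u₂] ++ x₂, Y) ∧
        Promising G (x₁ ++ [u₂, u₁] ++ x₂, Y)) := by
      rintro ⟨hA, hB⟩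
      obtain ⟨y₁, v, y₂, v', y₃, hYeq, hv, hv'⟩ := exists_two_of_filter
        (p := fun w : BTree => decide (∃ i ∈ (BTree.node u₁ u₂).leafList, G.φ i ∈ w.leafList))
        (L := Y) hdeg
      rw [decide_eq_true_eq] at hv hv'
      obtain ⟨i₀, hi₀u, hi₀v⟩ := hv
      obtain ⟨j₀, hj₀u, hj₀v'⟩ := hv'
      have hsplit : ∀ {i : ℕ}, i ∈ (BTree.node u₁ u₂).leafList →
          i ∈ u₁.leafList ∨ i ∈ u₂.leafList := by
        intro i h
        simpa only [BTree.leafList, List.mem_append] using h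
      have hwhere : ∀ k, k ∈ (BTree.node u₁ u₂).leafList →
          ∃ w₀ ∈ Y, G.φ k ∈ w₀.leafList := by
        intro k hk
        have hkT : k ∈ G.T.leafList := hlabX.subset (mem_labelsOf.2 ⟨_, by simp, hk⟩)
        have hkn : k < n := (G.hT.2 k).1 hkT
        exact mem_labelsOf.1 (hlabY.mem_iff.2 ((G.hS.2 _).2 (phi_lt G hkn)))
      rcases hsplit hi₀u with hi₀1 | hi₀2 <;> rcases hsplit hj₀u with hj₀1 | hj₀2
      · -- i₀ ∈ u₁ → v, j₀ ∈ u₁ → v' : use a leaf of u₂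
        obtain ⟨k₀, hk₀⟩ := List.exists_mem_of_ne_nil _ (BTree.leafList_ne_nil u₂)
        obtain ⟨w₀, hw₀Y, hφk₀⟩ := hwhere k₀ (by
          simp only [BTree.leafList, List.mem_append]; exact Or.inr hk₀)
        rw [hYeq] at hw₀Y
        simp only [List.mem_append, List.mem_cons] at hw₀Y
        rcases hw₀Y with h | h | h | h | h
        · obtain ⟨s, t, rfl⟩ := List.append_of_mem h
          exact key2 G hA (show Y = s ++ w₀ :: (t ++ v :: (y₂ ++ v' :: y₃))
            by rw [hYeq]; simp) (show v' ∈ t ++ v :: (y₂ ++ v' :: y₃)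
            by simp) hj₀1 hk₀ hφk₀ hj₀v'
        · subst h
          exact key2 G hA hYeq (show v' ∈ y₂ ++ v' :: y₃ by simp) hj₀1 hk₀ hφk₀ hj₀v'
        · obtain ⟨s, t, rfl⟩ := List.append_of_mem h
          exact key2 G hA (show Y = (y₁ ++ v :: s) ++ w₀ :: (t ++ v' :: y₃)
            by rw [hYeq]; simp) (by simp) hj₀1 hk₀ hφk₀ hj₀v'
        · subst h
          exact key2 G hB hYeq (show w₀ ∈ y₂ ++ w₀ :: y₃ by simp) hk₀ hi₀1 hi₀v hφk₀
        · obtain ⟨s, t, rfl⟩ := List.append_of_mem h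
          exact key2 G hB hYeq (show w₀ ∈ y₂ ++ v' :: (s ++ w₀ :: t) by simp)
            hk₀ hi₀1 hi₀v hφk₀
      · -- i₀ ∈ u₁ → v, j₀ ∈ u₂ → v'
        exact key2 G hB hYeq (show v' ∈ y₂ ++ v' :: y₃ by simp) hj₀2 hi₀1 hi₀v hj₀v'
      · -- i₀ ∈ u₂ → v, j₀ ∈ u₁ → v'
        exact key2 G hA hYeq (show v' ∈ y₂ ++ v' :: y₃ by simp) hj₀1 hi₀2 hi₀v hj₀v'
      · -- i₀ ∈ u₂ → v, j₀ ∈ u₂ → v' : use a leaf of u₁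
        obtain ⟨k₀, hk₀⟩ := List.exists_mem_of_ne_nil _ (BTree.leafList_ne_nil u₁)
        obtain ⟨w₀, hw₀Y, hφk₀⟩ := hwhere k₀ (by
          simp only [BTree.leafList, List.mem_append]; exact Or.inl hk₀)
        rw [hYeq] at hw₀Y
        simp only [List.mem_append, List.mem_cons] at hw₀Y
        rcases hw₀Y with h | h | h | h | h
        · obtain ⟨s, t, rfl⟩ := List.append_of_mem h
          exact key2 G hB (show Y = s ++ w₀ :: (t ++ v :: (y₂ ++ v' :: y₃))
            by rw [hYeq]; simp) (show v' ∈ t ++ v :: (y₂ ++ v' :: y₃)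
            by simp) hj₀2 hk₀ hφk₀ hj₀v'
        · subst h
          exact key2 G hB hYeq (show v' ∈ y₂ ++ v' :: y₃ by simp) hj₀2 hk₀ hφk₀ hj₀v'
        · obtain ⟨s, t, rfl⟩ := List.append_of_mem h
          exact key2 G hB (show Y = (y₁ ++ v :: s) ++ w₀ :: (t ++ v' :: y₃)
            by rw [hYeq]; simp) (by simp) hj₀2 hk₀ hφk₀ hj₀v'
        · subst h
          exact key2 G hA hYeq (show w₀ ∈ y₂ ++ w₀ :: y₃ by simp) hk₀ hi₀2 hi₀v hφk₀
        · obtain ⟨s, t, rfl⟩ := List.append_of_mem h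
          exact key2 G hA hYeq (show w₀ ∈ y₂ ++ v' :: (s ++ w₀ :: t) by simp)
            hk₀ hi₀2 hi₀v hφk₀
    rcases hOr with h12 | h21
    · exact Or.inl ⟨h12, fun h21 => hnb ⟨h12, h21⟩⟩
    · exact Or.inr ⟨h21, fun h12 => hnb ⟨h12, h21⟩⟩
end

section
/- Let (T,S,φ) be a planar tanglegram of size n, let {(X_k,Y_k)}_{k=1}^{2n−1} be a promising partial sequence for a planar layout (X,Y), and let (X',Y') be any planar layout of (T,S,φ). Then the sequence {(X_k',Y_k')}_{k=1}^{2n−1} obtained by the contraction construction is a promising partial sequence for (X',Y'). -/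
/-- `seq` (indexed `1, …, 2n-1`) is a partial sequence for the layout `(X, Y)` of the
tanglegram `G` of size `n` : it starts at the pair of roots, each step replaces one
vertex by its two children (in an appropriate order), and it ends at the partial
layout consisting only of leaves whose label lists are `X` and `Y`. -/
def IsPartialSeqFor {n : ℕ} (G : Tanglegram n) (seq : ℕ → List BTree × List BTree)
    (X Y : List ℕ) : Prop :=
  seq 1 = ([G.T], [G.S]) ∧
  AllLeaves (seq (2*n-1)).1 ∧ AllLeaves (seq (2*n-1)).2 ∧
  labelsOf (seq (2*n-1)).1 = X ∧ labelsOf (seq (2*n-1)).2 = Y ∧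
  ∀ k, 1 ≤ k → k ≤ 2*n-2 → PLStep (seq k) (seq (k+1))

/-! ## Auxiliary development for the contraction construction -/

namespace ContractionAux

open List

/-- Every leaf list is nonempty. -/
lemma leafList_ne_nil : ∀ t : BTree, t.leafList ≠ []
  | .leaf _ => by simp [BTree.leafList]
  | .node l r => by
      simp only [BTree.leafList, ne_eq, List.append_eq_nil_iff]
      intro h
      exact leafList_ne_nil l h.1

/-- The order relation on vertices induced by a leaf ordering. -/
def R (X' : List ℕ) (u w : BTree) : Prop :=
  ∀ a ∈ u.leafList, ∀ b ∈ w.leafList, X'.idxOf a < X'.idxOf b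

lemma R_asymm {X' : List ℕ} {u w : BTree} (h1 : R X' u w) (h2 : R X' w u) : False := by
  obtain ⟨a, ha⟩ := List.exists_mem_of_ne_nil _ (leafList_ne_nil u)
  obtain ⟨b, hb⟩ := List.exists_mem_of_ne_nil _ (leafList_ne_nil w)
  exact Nat.lt_asymm (h1 a ha b hb) (h2 b hb a ha)

/-- `t` is a subtree of the second argument. -/
def IsSub (t : BTree) : BTree → Prop
  | .leaf i => t = .leaf i
  | .node l r => t = .node l r ∨ IsSub t l ∨ IsSub t r

lemma isSub_refl : ∀ T : BTree, IsSub T T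
  | .leaf _ => rfl
  | .node _ _ => Or.inl rfl

lemma isSub_left (l r : BTree) : IsSub l (.node l r) := Or.inr (Or.inl (isSub_refl l))
lemma isSub_right (l r : BTree) : IsSub r (.node l r) := Or.inr (Or.inr (isSub_refl r))

lemma isSub_trans {t u : BTree} : ∀ {T : BTree}, IsSub t u → IsSub u T → IsSub t T
  | .leaf i, h1, h2 => by
      have : u = BTree.leaf i := h2
      subst this; exact h1
  | .node l r, h1, h2 => by
      rcases h2 with h2 | h2 | h2
      · subst h2; exact h1
      · exact Or.inr (Or.inl (isSub_trans h1 h2))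
      · exact Or.inr (Or.inr (isSub_trans h1 h2))

lemma leafList_sublist {t : BTree} : ∀ {T : BTree}, IsSub t T → t.leafList.Sublist T.leafList
  | .leaf i, h => by
      have : t = BTree.leaf i := h
      subst this; exact List.Sublist.refl _
  | .node l r, h => by
      rcases h with h | h | h
      · subst h; exact List.Sublist.refl _
      · exact (leafList_sublist h).trans (List.sublist_append_left _ _)
      · exact (leafList_sublist h).trans (List.sublist_append_right _ _)

lemma mem_leaves_iff {a : ℕ} {t : BTree} : a ∈ t.leaves ↔ a ∈ t.leafList :=
  List.mem_toFinset

lemma clade_self : ∀ t : BTree, t.Clade t.leaves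
  | .leaf i => by simp [BTree.Clade, BTree.leaves, BTree.leafList]
  | .node _ _ => Or.inl rfl

lemma clade_mono {t : BTree} {c : Finset ℕ} :
    ∀ {T : BTree}, IsSub t T → t.Clade c → T.Clade c
  | .leaf i, h, hc => by
      have : t = BTree.leaf i := h
      subst this; exact hc
  | .node l r, h, hc => by
      rcases h with h | h | h
      · subst h; exact hc
      · exact Or.inr (Or.inl (clade_mono h hc))
      · exact Or.inr (Or.inr (clade_mono h hc))

lemma clade_of_isSub {t T : BTree} (h : IsSub t T) : T.Clade t.leaves :=
  clade_mono h (clade_self t)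

/-! ### labelsOf -/

lemma labelsOf_append (A B : List BTree) : labelsOf (A ++ B) = labelsOf A ++ labelsOf B := by
  simp [labelsOf]

lemma labelsOf_cons (t : BTree) (L : List BTree) :
    labelsOf (t :: L) = t.leafList ++ labelsOf L := by simp [labelsOf]

lemma labelsOf_singleton (t : BTree) : labelsOf [t] = t.leafList := by simp [labelsOf]

lemma labelsOf_nil : labelsOf [] = [] := rfl

lemma labelsOf_perm {L M : List BTree} (h : L.Perm M) : (labelsOf L).Perm (labelsOf M) :=
  (h.map BTree.leafList).flatten

lemma mem_labelsOf {a : ℕ} {L : List BTree} :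
    a ∈ labelsOf L ↔ ∃ u ∈ L, a ∈ u.leafList := by
  simp [labelsOf, List.mem_flatten]

end ContractionAux
namespace ContractionAux
open List

lemma indexOf_mem_block {X' : List ℕ} (hnd : X'.Nodup) {A M B : List ℕ}
    (hX : X' = A ++ M ++ B) {a : ℕ} (ha : a ∈ M) :
    A.length ≤ X'.idxOf a ∧ X'.idxOf a < A.length + M.length := by
  subst hX
  rw [List.append_assoc] at hnd ⊢
  have hA : a ∉ A := by
    intro h
    exact (List.nodup_append.mp hnd).2.2 _ h _ (List.mem_append_left B ha) rfl
  rw [List.idxOf_append_of_notMem hA, List.idxOf_append_of_mem ha]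
  have := List.idxOf_lt_length_iff.mpr ha
  omega

lemma exists_indexOf_eq {X' : List ℕ} (hnd : X'.Nodup) {A M B : List ℕ}
    (hX : X' = A ++ M ++ B) {p : ℕ} (h1 : A.length ≤ p) (h2 : p < A.length + M.length) :
    ∃ a ∈ M, X'.idxOf a = p := by
  subst hX
  rw [List.append_assoc] at hnd ⊢
  have hMnd : M.Nodup := ((List.nodup_append.mp (List.nodup_append.mp hnd).2.1).1)
  have hi : p - A.length < M.length := by omega
  refine ⟨M[p - A.length], List.getElem_mem hi, ?_⟩
  have hA : M[p - A.length] ∉ A := by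
    intro h
    exact (List.nodup_append.mp hnd).2.2 _ h _
      (List.mem_append_left B (List.getElem_mem hi)) rfl
  rw [List.idxOf_append_of_notMem hA, List.idxOf_append_of_mem (List.getElem_mem hi),
    hMnd.idxOf_getElem _ hi]
  omega

lemma blocks_total {X' : List ℕ} (hnd : X'.Nodup) {s₁ s₂ : Finset ℕ}
    (h₁ : ConsecIn X' s₁) (h₂ : ConsecIn X' s₂)
    (hd : ∀ a, a ∈ s₁ → a ∉ s₂) (hn₁ : s₁.Nonempty) (hn₂ : s₂.Nonempty) :
    (∀ a ∈ s₁, ∀ b ∈ s₂, X'.idxOf a < X'.idxOf b) ∨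
    (∀ b ∈ s₂, ∀ a ∈ s₁, X'.idxOf b < X'.idxOf a) := by
  obtain ⟨A₁, M₁, B₁, hX₁, hm₁⟩ := h₁
  obtain ⟨A₂, M₂, B₂, hX₂, hm₂⟩ := h₂
  obtain ⟨a₁, ha₁⟩ := hn₁
  obtain ⟨a₂, ha₂⟩ := hn₂
  have hM₁pos : 0 < M₁.length := List.length_pos_iff.mpr
    (fun h => by simp [h] at hm₁; exact (hm₁ a₁).elim ha₁)
  have hM₂pos : 0 < M₂.length := List.length_pos_iff.mpr
    (fun h => by simp [h] at hm₂; exact (hm₂ a₂).elim ha₂)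
  by_cases hc : A₁.length + M₁.length ≤ A₂.length
  · left; intro a ha b hb
    have t1 := (indexOf_mem_block hnd hX₁ ((hm₁ a).mpr ha)).2
    have t2 := (indexOf_mem_block hnd hX₂ ((hm₂ b).mpr hb)).1
    omega
  · by_cases hc2 : A₂.length + M₂.length ≤ A₁.length
    · right; intro b hb a ha
      have t1 := (indexOf_mem_block hnd hX₂ ((hm₂ b).mpr hb)).2
      have t2 := (indexOf_mem_block hnd hX₁ ((hm₁ a).mpr ha)).1
      omega
    · exfalso
      set p := max A₁.length A₂.length with hp
      obtain ⟨a, haM, hap⟩ := exists_indexOf_eq hnd hX₁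
        (le_max_left _ _ : A₁.length ≤ p) (by omega)
      obtain ⟨b, hbM, hbp⟩ := exists_indexOf_eq hnd hX₂
        (le_max_right _ _ : A₂.length ≤ p) (by omega)
      have hab : a = b := by
        have haX : a ∈ X' := by rw [hX₁]; simp [haM]
        have hbX : b ∈ X' := by rw [hX₂]; simp [hbM]
        exact (List.idxOf_inj haX).mp (by rw [hap, hbp])
      exact hd a ((hm₁ a).mp haM) (hab ▸ (hm₂ b).mp hbM)

lemma R_total {X' : List ℕ} (hnd : X'.Nodup) {u w : BTree}
    (hu : ConsecIn X' u.leaves) (hw : ConsecIn X' w.leaves)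
    (hdisj : ∀ a ∈ u.leafList, a ∉ w.leafList) :
    R X' u w ∨ R X' w u := by
  obtain ⟨a, ha⟩ := List.exists_mem_of_ne_nil _ (leafList_ne_nil u)
  obtain ⟨b, hb⟩ := List.exists_mem_of_ne_nil _ (leafList_ne_nil w)
  have := blocks_total hnd hu hw
    (fun x hx hx' => hdisj x (mem_leaves_iff.mp hx) (mem_leaves_iff.mp hx'))
    ⟨a, mem_leaves_iff.mpr ha⟩ ⟨b, mem_leaves_iff.mpr hb⟩
  rcases this with h | h
  · exact Or.inl fun x hx y hy =>
      h x (mem_leaves_iff.mpr hx) y (mem_leaves_iff.mpr hy)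
  · exact Or.inr fun x hx y hy =>
      h x (mem_leaves_iff.mpr hx) y (mem_leaves_iff.mpr hy)

lemma pairwise_unique {α : Type*} {r : α → α → Prop}
    (hasym : ∀ a b, r a b → r b a → False)
    {L M : List α} (hp : L.Perm M) (hL : L.Pairwise r) (hM : M.Pairwise r) : L = M := by
  haveI : IsAntisymm α r := ⟨fun a b h1 h2 => (hasym a b h1 h2).elim⟩
  exact hp.eq_of_pairwise (fun a b _ _ h1 h2 => (hasym a b h1 h2).elim) hL hM

end ContractionAux
namespace ContractionAux
open List

lemma perm_insert1 {α : Type*} (y₁ y₂ : List α) (t : α) :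
    (y₁ ++ [t] ++ y₂).Perm (t :: (y₁ ++ y₂)) := by
  have h : y₁ ++ [t] ++ y₂ = y₁ ++ t :: y₂ := by simp
  rw [h]; exact List.perm_middle

lemma perm_insert2 {α : Type*} (y₁ y₂ : List α) (u v : α) :
    (y₁ ++ [u, v] ++ y₂).Perm (u :: v :: (y₁ ++ y₂)) := by
  have h : y₁ ++ [u, v] ++ y₂ = y₁ ++ u :: (v :: y₂) := by simp
  rw [h]
  exact List.perm_middle.trans (List.Perm.cons u List.perm_middle)

lemma replaceStep_perm {L L' : List BTree} (h : ReplaceStep L L') :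
    ∃ x₁ x₂ l r, L.Perm (BTree.node l r :: (x₁ ++ x₂)) ∧
      L'.Perm (l :: r :: (x₁ ++ x₂)) ∧
      L = x₁ ++ [BTree.node l r] ++ x₂ := by
  obtain ⟨x₁, x₂, l, r, hL, hL'⟩ := h
  refine ⟨x₁, x₂, l, r, by rw [hL]; exact perm_insert1 _ _ _, ?_, hL⟩
  rcases hL' with h' | h' <;> subst h'
  · exact perm_insert2 _ _ _ _
  · exact (perm_insert2 _ _ _ _).trans (List.Perm.swap _ _ _)

lemma replaceStep_labels {L L' : List BTree} (h : ReplaceStep L L') :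
    (labelsOf L).Perm (labelsOf L') := by
  obtain ⟨x₁, x₂, l, r, hp, hp', _⟩ := replaceStep_perm h
  refine (labelsOf_perm hp).trans (List.Perm.trans ?_ (labelsOf_perm hp').symm)
  simp only [labelsOf_cons, BTree.leafList, List.append_assoc]
  exact List.Perm.refl _

lemma replaceStep_subtrees {T0 : BTree} {L L' : List BTree} (h : ReplaceStep L L')
    (hs : ∀ u ∈ L, IsSub u T0) : ∀ u ∈ L', IsSub u T0 := by
  obtain ⟨x₁, x₂, l, r, hL, hL'⟩ := h
  have hnode : IsSub (BTree.node l r) T0 := hs _ (by rw [hL]; simp)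
  have hsl : IsSub l T0 := isSub_trans (isSub_left l r) hnode
  have hsr : IsSub r T0 := isSub_trans (isSub_right l r) hnode
  intro u hu
  have hmem : u ∈ x₁ ∨ u = l ∨ u = r ∨ u ∈ x₂ := by
    rcases hL' with h' | h' <;> subst h' <;> simp at hu <;> tauto
  rcases hmem with hu' | rfl | rfl | hu'
  · exact hs u (by rw [hL]; simp [hu'])
  · exact hsl
  · exact hsr
  · exact hs u (by rw [hL]; simp [hu'])

lemma replaceStep_context (A B : List BTree) {M M' : List BTree} (h : ReplaceStep M M') :
    ReplaceStep (A ++ M ++ B) (A ++ M' ++ B) := by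
  obtain ⟨x₁, x₂, l, r, hM, hM'⟩ := h
  refine ⟨A ++ x₁, x₂ ++ B, l, r, by subst hM; simp, ?_⟩
  rcases hM' with h' | h'
  · left; subst h'; simp
  · right; subst h'; simp

lemma rt_context (A B : List BTree) {M M' : List BTree}
    (h : Relation.ReflTransGen ReplaceStep M M') :
    Relation.ReflTransGen ReplaceStep (A ++ M ++ B) (A ++ M' ++ B) :=
  Relation.ReflTransGen.lift (fun L => A ++ L ++ B)
    (fun _ _ hs => replaceStep_context A B hs) _ _ h

lemma rt_fst (Y0 : List BTree) {L L' : List BTree}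
    (h : Relation.ReflTransGen ReplaceStep L L') :
    Relation.ReflTransGen PLStep (L, Y0) (L', Y0) :=
  Relation.ReflTransGen.lift (fun L => (L, Y0))
    (fun _ _ hs => Or.inl ⟨hs, rfl⟩) _ _ h

lemma rt_snd (X0 : List BTree) {L L' : List BTree}
    (h : Relation.ReflTransGen ReplaceStep L L') :
    Relation.ReflTransGen PLStep (X0, L) (X0, L') :=
  Relation.ReflTransGen.lift (fun L => (X0, L))
    (fun _ _ hs => Or.inr ⟨rfl, hs⟩) _ _ h

lemma pairwise_replace {X' : List ℕ} {y₁ y₂ : List BTree} {t u v : BTree}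
    (hu : ∀ a ∈ u.leafList, a ∈ t.leafList) (hv : ∀ a ∈ v.leafList, a ∈ t.leafList)
    (h : (y₁ ++ t :: y₂).Pairwise (R X')) (huv : R X' u v) :
    (y₁ ++ u :: v :: y₂).Pairwise (R X') := by
  rw [List.pairwise_append] at h ⊢
  obtain ⟨h1, h2, h3⟩ := h
  rw [List.pairwise_cons] at h2
  obtain ⟨h2t, h2y⟩ := h2
  refine ⟨h1, ?_, ?_⟩
  · rw [List.pairwise_cons, List.pairwise_cons]
    refine ⟨?_, ⟨?_, h2y⟩⟩
    · intro w hw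
      rcases List.mem_cons.mp hw with rfl | hw
      · exact huv
      · exact fun a ha b hb => h2t w hw a (hu a ha) b hb
    · exact fun w hw a ha b hb => h2t w hw a (hv a ha) b hb
  · intro a ha b hb
    rcases List.mem_cons.mp hb with rfl | hb
    · exact fun x hx y hy => h3 a ha t (List.mem_cons_self) x hx y (hu y hy)
    rcases List.mem_cons.mp hb with rfl | hb
    · exact fun x hx y hy => h3 a ha t (List.mem_cons_self) x hx y (hv y hy)
    · exact h3 a ha b (List.mem_cons_of_mem t hb)

end ContractionAux
namespace ContractionAux
open List

lemma mem_leafList_left {a : ℕ} {l r : BTree} (h : a ∈ l.leafList) :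
    a ∈ (BTree.node l r).leafList := by
  simp [BTree.leafList, h]

lemma mem_leafList_right {a : ℕ} {l r : BTree} (h : a ∈ r.leafList) :
    a ∈ (BTree.node l r).leafList := by
  simp [BTree.leafList, h]

lemma node_disjoint {T0 : BTree} (hnd : T0.leafList.Nodup) {l r : BTree}
    (h : IsSub (BTree.node l r) T0) : ∀ a ∈ l.leafList, a ∉ r.leafList := by
  have := (leafList_sublist h).nodup hnd
  simp only [BTree.leafList, List.nodup_append] at this
  exact fun a ha hb => this.2.2 a ha a hb rfl

/-- Totality of `R X'` on the children of a surviving node. -/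
lemma R_total_children {X' : List ℕ} {T0 : BTree} (hnd : T0.leafList.Nodup)
    (hX' : X'.Perm T0.leafList) (hc : ∀ s, T0.Clade s → ConsecIn X' s)
    {l r : BTree} (h : IsSub (BTree.node l r) T0) :
    R X' l r ∨ R X' r l := by
  have hndX' : X'.Nodup := hX'.nodup_iff.mpr hnd
  have hsl : IsSub l T0 := isSub_trans (isSub_left l r) h
  have hsr : IsSub r T0 := isSub_trans (isSub_right l r) h
  exact R_total hndX' (hc _ (clade_of_isSub hsl)) (hc _ (clade_of_isSub hsr))
    (node_disjoint hnd h)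

/-- Transfer of one refinement step along the reordering of the contraction
construction. -/
lemma step_transfer {X' : List ℕ} {T0 : BTree} (hnd : T0.leafList.Nodup)
    (hX' : X'.Perm T0.leafList) (hc : ∀ s, T0.Clade s → ConsecIn X' s)
    {L L' M M' : List BTree}
    (hsubL : ∀ u ∈ L, IsSub u T0)
    (hML : M.Perm L) (hM'L' : M'.Perm L')
    (hstep : ReplaceStep L L')
    (hM : M.Pairwise (R X')) (hM' : M'.Pairwise (R X')) :
    ReplaceStep M M' := by
  obtain ⟨x₁, x₂, l, r, hLp, hL'p, hLeq⟩ := replaceStep_perm hstep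
  have hmem : BTree.node l r ∈ M := hML.mem_iff.mpr (by rw [hLeq]; simp)
  obtain ⟨y₁, y₂, hMeq⟩ := List.mem_iff_append.mp hmem
  have hMeq' : M = y₁ ++ [BTree.node l r] ++ y₂ := by rw [hMeq]; simp
  have hsubnode : IsSub (BTree.node l r) T0 := hsubL _ (by rw [hLeq]; simp)
  have hyx : (y₁ ++ y₂).Perm (x₁ ++ x₂) := by
    have h1 : M.Perm (BTree.node l r :: (y₁ ++ y₂)) := by
      rw [hMeq']; exact perm_insert1 _ _ _
    exact (h1.symm.trans (hML.trans hLp)).cons_inv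
  have hM'p : M'.Perm (l :: r :: (y₁ ++ y₂)) :=
    hM'L'.trans (hL'p.trans (List.Perm.cons l (List.Perm.cons r hyx.symm)))
  have hMpw : (y₁ ++ BTree.node l r :: y₂).Pairwise (R X') := by
    rw [← hMeq]; exact hM
  rcases R_total_children hnd hX' hc hsubnode with htot | htot
  · have hC : (y₁ ++ l :: r :: y₂).Pairwise (R X') :=
      pairwise_replace (fun a ha => mem_leafList_left ha)
        (fun a ha => mem_leafList_right ha) hMpw htot
    have hCp : (y₁ ++ l :: r :: y₂).Perm M' := by
      have : (y₁ ++ [l, r] ++ y₂).Perm M' := (perm_insert2 _ _ _ _).trans hM'p.symm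
      simpa using this
    have hCeq : y₁ ++ l :: r :: y₂ = M' :=
      pairwise_unique (fun _ _ => R_asymm) hCp hC hM'
    exact ⟨y₁, y₂, l, r, hMeq', Or.inl (by rw [← hCeq]; simp)⟩
  · have hC : (y₁ ++ r :: l :: y₂).Pairwise (R X') :=
      pairwise_replace (fun a ha => mem_leafList_right ha)
        (fun a ha => mem_leafList_left ha) hMpw htot
    have hCp : (y₁ ++ r :: l :: y₂).Perm M' := by
      have : (y₁ ++ [r, l] ++ y₂).Perm M' :=
        ((perm_insert2 _ _ _ _).trans (List.Perm.swap _ _ _)).trans hM'p.symm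
      simpa using this
    have hCeq : y₁ ++ r :: l :: y₂ = M' :=
      pairwise_unique (fun _ _ => R_asymm) hCp hC hM'
    exact ⟨y₁, y₂, l, r, hMeq', Or.inr (by rw [← hCeq]; simp)⟩

/-- Any subtree can be fully expanded in the order dictated by `X'`. -/
lemma expand {X' : List ℕ} {T0 : BTree} (hnd : T0.leafList.Nodup)
    (hX' : X'.Perm T0.leafList) (hc : ∀ s, T0.Clade s → ConsecIn X' s) :
    ∀ t : BTree, IsSub t T0 →
      ∃ L, Relation.ReflTransGen ReplaceStep [t] L ∧ AllLeaves L ∧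
        L.Pairwise (R X') ∧ (labelsOf L).Perm t.leafList := by
  intro t
  induction t with
  | leaf i =>
      intro _
      exact ⟨[.leaf i], Relation.ReflTransGen.refl,
        fun u hu => ⟨i, by simpa using hu⟩, by simp,
        by simp [labelsOf, BTree.leafList]⟩
  | node l r ihl ihr =>
      intro hsub
      have hsl : IsSub l T0 := isSub_trans (isSub_left l r) hsub
      have hsr : IsSub r T0 := isSub_trans (isSub_right l r) hsub
      obtain ⟨Ll, hLl, hALl, hPl, hlabl⟩ := ihl hsl
      obtain ⟨Lr, hLr, hALr, hPr, hlabr⟩ := ihr hsr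
      have hcross : ∀ {u w L₁ L₂ t₁ t₂}, u ∈ L₁ → w ∈ L₂ →
          (labelsOf L₁).Perm (BTree.leafList t₁) → (labelsOf L₂).Perm (BTree.leafList t₂) →
          R X' t₁ t₂ → R X' u w := by
        intro u w L₁ L₂ t₁ t₂ hu hw hp1 hp2 h a ha b hb
        exact h a (hp1.mem_iff.mp (mem_labelsOf.mpr ⟨u, hu, ha⟩))
          b (hp2.mem_iff.mp (mem_labelsOf.mpr ⟨w, hw, hb⟩))
      rcases R_total_children hnd hX' hc hsub with htot | htot
      · refine ⟨Ll ++ Lr, ?_, ?_, ?_, ?_⟩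
        · have s1 : ReplaceStep [BTree.node l r] [l, r] :=
            ⟨[], [], l, r, by simp, Or.inl (by simp)⟩
          refine Relation.ReflTransGen.head s1 ?_
          have c1 := rt_context [] [r] hLl
          have c2 := rt_context Ll [] hLr
          simp only [List.nil_append, List.append_nil] at c1 c2
          exact Relation.ReflTransGen.trans (by simpa using c1) c2
        · intro u hu
          rcases List.mem_append.mp hu with h | h
          · exact hALl u h
          · exact hALr u h
        · rw [List.pairwise_append]
          exact ⟨hPl, hPr, fun u hu w hw => hcross hu hw hlabl hlabr htot⟩
        · rw [labelsOf_append]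
          exact (hlabl.append hlabr)
      · refine ⟨Lr ++ Ll, ?_, ?_, ?_, ?_⟩
        · have s1 : ReplaceStep [BTree.node l r] [r, l] :=
            ⟨[], [], l, r, by simp, Or.inr (by simp)⟩
          refine Relation.ReflTransGen.head s1 ?_
          have c1 := rt_context [] [l] hLr
          have c2 := rt_context Lr [] hLl
          simp only [List.nil_append, List.append_nil] at c1 c2
          exact Relation.ReflTransGen.trans (by simpa using c1) c2
        · intro u hu
          rcases List.mem_append.mp hu with h | h
          · exact hALr u h
          · exact hALl u h
        · rw [List.pairwise_append]
          exact ⟨hPr, hPl, fun u hu w hw => hcross hu hw hlabr hlabl htot⟩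
        · rw [labelsOf_append]
          exact (hlabr.append hlabl).trans
            (by show (BTree.leafList r ++ BTree.leafList l).Perm
                  (BTree.node l r).leafList
                simpa [BTree.leafList] using
                  (List.perm_append_comm :
                    (BTree.leafList r ++ BTree.leafList l).Perm _))

/-- A sorted list of subtrees expands to a planar-layout-compatible leaf list. -/
lemma expand_list {X' : List ℕ} {T0 : BTree} (hnd : T0.leafList.Nodup)
    (hX' : X'.Perm T0.leafList) (hc : ∀ s, T0.Clade s → ConsecIn X' s) :
    ∀ L : List BTree, (∀ u ∈ L, IsSub u T0) → L.Pairwise (R X') →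
      ∃ L', Relation.ReflTransGen ReplaceStep L L' ∧ AllLeaves L' ∧
        L'.Pairwise (R X') ∧ (labelsOf L').Perm (labelsOf L) := by
  intro L
  induction L with
  | nil => exact fun _ _ => ⟨[], Relation.ReflTransGen.refl, fun u hu => by simp at hu,
      by simp, by simp⟩
  | cons t L ih =>
      intro hs hpw
      rw [List.pairwise_cons] at hpw
      obtain ⟨Lt, hLt, hALt, hPt, hlabt⟩ :=
        expand hnd hX' hc t (hs t (List.mem_cons_self))
      obtain ⟨L', hL', hAL', hPL', hlabL'⟩ :=
        ih (fun u hu => hs u (List.mem_cons_of_mem t hu)) hpw.2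
      refine ⟨Lt ++ L', ?_, ?_, ?_, ?_⟩
      · have c1 := rt_context [] L hLt
        have c2 := rt_context Lt [] hL'
        simp only [List.nil_append, List.append_nil] at c1 c2
        exact Relation.ReflTransGen.trans (by simpa using c1) c2
      · intro u hu
        rcases List.mem_append.mp hu with h | h
        · exact hALt u h
        · exact hAL' u h
      · rw [List.pairwise_append]
        refine ⟨hPt, hPL', fun u hu w hw a ha b hb => ?_⟩
        have haT : a ∈ t.leafList := hlabt.mem_iff.mp (mem_labelsOf.mpr ⟨u, hu, ha⟩)
        obtain ⟨w₀, hw₀, hbw₀⟩ := mem_labelsOf.mp (hlabL'.mem_iff.mp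
          (mem_labelsOf.mpr ⟨w, hw, hb⟩))
        exact hpw.1 w₀ hw₀ a haT b hbw₀
      · rw [labelsOf_append, labelsOf_cons]
        exact hlabt.append hlabL'

end ContractionAux
namespace ContractionAux
open List

lemma labels_pairwise {X' : List ℕ} {L : List BTree} (hall : AllLeaves L)
    (hpw : L.Pairwise (R X')) :
    (labelsOf L).Pairwise (fun a b => X'.idxOf a < X'.idxOf b) := by
  rw [labelsOf, List.pairwise_flatten]
  constructor
  · intro l hl
    obtain ⟨u, hu, rfl⟩ := List.mem_map.mp hl
    obtain ⟨i, rfl⟩ := hall u hu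
    simp [BTree.leafList]
  · exact List.pairwise_map.mpr hpw

lemma self_pairwise {X' : List ℕ} (hnd : X'.Nodup) :
    X'.Pairwise (fun a b => X'.idxOf a < X'.idxOf b) := by
  rw [List.pairwise_iff_getElem]
  intro i j hi hj hij
  rw [hnd.idxOf_getElem i hi, hnd.idxOf_getElem j hj]
  exact hij

lemma labels_eq {X' : List ℕ} (hnd : X'.Nodup) {L : List BTree} (hall : AllLeaves L)
    (hpw : L.Pairwise (R X')) (hperm : (labelsOf L).Perm X') : labelsOf L = X' :=
  pairwise_unique (fun _ _ h1 h2 => Nat.lt_asymm h1 h2) hperm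
    (labels_pairwise hall hpw) (self_pairwise hnd)

/-- A partial layout sorted according to a planar layout is promising. -/
lemma promising_of {n : ℕ} (G : Tanglegram n) {X' Y' : List ℕ}
    (hpl : IsPlanarLayout G X' Y')
    (hTnd : G.T.leafList.Nodup) (hSnd : G.S.leafList.Nodup)
    (p : List BTree × List BTree)
    (h1 : ∀ u ∈ p.1, IsSub u G.T) (h2 : (labelsOf p.1).Perm G.T.leafList)
    (h3 : ∀ u ∈ p.2, IsSub u G.S) (h4 : (labelsOf p.2).Perm G.S.leafList)
    (hp1 : p.1.Pairwise (R X')) (hp2 : p.2.Pairwise (R Y')) :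
    Promising G p := by
  obtain ⟨⟨hX'p, hY'p, hX'c, hY'c⟩, hcr⟩ := hpl
  have hX'nd : X'.Nodup := hX'p.nodup_iff.mpr hTnd
  have hY'nd : Y'.Nodup := hY'p.nodup_iff.mpr hSnd
  obtain ⟨L₁, hL₁, hA₁, hP₁, hlab₁⟩ := expand_list hTnd hX'p hX'c p.1 h1 hp1
  obtain ⟨L₂, hL₂, hA₂, hP₂, hlab₂⟩ := expand_list hSnd hY'p hY'c p.2 h3 hp2
  refine ⟨(L₁, L₂), ?_, hA₁, hA₂, ?_⟩
  · have s1 : Relation.ReflTransGen PLStep (p.1, p.2) (L₁, p.2) := rt_fst p.2 hL₁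
    have s2 : Relation.ReflTransGen PLStep (L₁, p.2) (L₁, L₂) := rt_snd L₁ hL₂
    exact (Prod.mk.eta (p := p)) ▸ s1.trans s2
  · have e1 : labelsOf L₁ = X' :=
      labels_eq hX'nd hA₁ hP₁ ((hlab₁.trans h2).trans hX'p.symm)
    have e2 : labelsOf L₂ = Y' :=
      labels_eq hY'nd hA₂ hP₂ ((hlab₂.trans h4).trans hY'p.symm)
    rw [show (L₁, L₂).1 = L₁ from rfl, show (L₁, L₂).2 = L₂ from rfl, e1, e2]
    exact ⟨⟨hX'p, hY'p, hX'c, hY'c⟩, hcr⟩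

end ContractionAux
open ContractionAux

/-- Let `(T,S,φ)` be a planar tanglegram of size `n`, let
`seq = {(X_k, Y_k)}` be a promising partial sequence for a planar layout `(X, Y)`,
and let `(X', Y')` be any planar layout.  If `seq'` is obtained from `seq` by the
contraction construction — i.e. each `(X_k', Y_k')` consists of the same vertices as
`(X_k, Y_k)`, reordered so that the leaf blocks appear in the order given by
`(X', Y')` — then `seq'` is a promising partial sequence for `(X', Y')`. -/
theorem contracted_sequence_promising {n : ℕ} (G : Tanglegram n)
    (X Y X' Y' : List ℕ) (seq seq' : ℕ → List BTree × List BTree)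
    (hXY : IsPlanarLayout G X Y)
    (hseq : IsPartialSeqFor G seq X Y)
    (hprom : ∀ k, 1 ≤ k → k ≤ 2*n-1 → Promising G (seq k))
    (hX'Y' : IsPlanarLayout G X' Y')
    (hperm : ∀ k, 1 ≤ k → k ≤ 2*n-1 →
      (seq' k).1.Perm (seq k).1 ∧ (seq' k).2.Perm (seq k).2)
    (horder : ∀ k, 1 ≤ k → k ≤ 2*n-1 →
      (seq' k).1.Pairwise (fun u w => ∀ a ∈ u.leafList, ∀ b ∈ w.leafList,
        X'.idxOf a < X'.idxOf b) ∧
      (seq' k).2.Pairwise (fun u w => ∀ a ∈ u.leafList, ∀ b ∈ w.leafList,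
        Y'.idxOf a < Y'.idxOf b)) :
    IsPartialSeqFor G seq' X' Y' ∧ ∀ k, 1 ≤ k → k ≤ 2*n-1 → Promising G (seq' k) := by
  obtain ⟨hTnd, hTmem⟩ := G.hT
  obtain ⟨hSnd, hSmem⟩ := G.hS
  have hn : 1 ≤ n := by
    obtain ⟨a, ha⟩ := List.exists_mem_of_ne_nil _ (leafList_ne_nil G.T)
    have := (hTmem a).mp ha; omega
  have hXp := hXY.1.1
  have hYp := hXY.1.2.1
  have hX'p := hX'Y'.1.1
  have hY'p := hX'Y'.1.2.1
  have hX'c := hX'Y'.1.2.2.1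
  have hY'c := hX'Y'.1.2.2.2
  have hX'nd : X'.Nodup := hX'p.nodup_iff.mpr hTnd
  have hY'nd : Y'.Nodup := hY'p.nodup_iff.mpr hSnd
  obtain ⟨hs1, hsA1, hsA2, hsX, hsY, hstp⟩ := hseq
  have key : ∀ k, 1 ≤ k → k ≤ 2*n-1 →
      ((∀ u ∈ (seq k).1, IsSub u G.T) ∧ (labelsOf (seq k).1).Perm G.T.leafList) ∧
      ((∀ u ∈ (seq k).2, IsSub u G.S) ∧ (labelsOf (seq k).2).Perm G.S.leafList) := by
    intro k hk1
    induction k, hk1 using Nat.le_induction with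
    | base =>
        intro _
        rw [hs1]
        refine ⟨⟨fun u hu => ?_, by simp [labelsOf]⟩,
          ⟨fun u hu => ?_, by simp [labelsOf]⟩⟩
        · have : u = G.T := by simpa using hu
          subst this; exact isSub_refl _
        · have : u = G.S := by simpa using hu
          subst this; exact isSub_refl _
    | succ k hk ih =>
        intro hk2
        have prev := ih (by omega)
        rcases hstp k hk (by omega) with ⟨hrs, heq⟩ | ⟨heq, hrs⟩
        · exact ⟨⟨replaceStep_subtrees hrs prev.1.1,
            (replaceStep_labels hrs).symm.trans prev.1.2⟩, heq ▸ prev.2⟩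
        · exact ⟨heq ▸ prev.1, ⟨replaceStep_subtrees hrs prev.2.1,
            (replaceStep_labels hrs).symm.trans prev.2.2⟩⟩
  have steps' : ∀ k, 1 ≤ k → k ≤ 2*n-2 → PLStep (seq' k) (seq' (k+1)) := by
    intro k hk1 hk2
    have h1 := hperm k hk1 (by omega)
    have h2 := hperm (k+1) (by omega) (by omega)
    have o1 := horder k hk1 (by omega)
    have o2 := horder (k+1) (by omega) (by omega)
    have g := key k hk1 (by omega)
    rcases hstp k hk1 hk2 with ⟨hrs, heq⟩ | ⟨heq, hrs⟩
    · left
      refine ⟨step_transfer hTnd hX'p hX'c g.1.1 h1.1 h2.1 hrs o1.1 o2.1, ?_⟩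
      have h22 := h2.2
      rw [← heq] at h22
      exact pairwise_unique (fun _ _ => R_asymm) (h1.2.trans h22.symm) o1.2 o2.2
    · right
      refine ⟨?_, step_transfer hSnd hY'p hY'c g.2.1 h1.2 h2.2 hrs o1.2 o2.2⟩
      have h21 := h2.1
      rw [← heq] at h21
      exact pairwise_unique (fun _ _ => R_asymm) (h1.1.trans h21.symm) o1.1 o2.1
  refine ⟨⟨?_, ?_, ?_, ?_, ?_, steps'⟩, ?_⟩
  · have h := hperm 1 le_rfl (by omega)
    rw [hs1] at h
    exact Prod.ext (List.perm_singleton.mp h.1) (List.perm_singleton.mp h.2)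
  · have h := hperm (2*n-1) (by omega) le_rfl
    exact fun t ht => hsA1 t (h.1.mem_iff.mp ht)
  · have h := hperm (2*n-1) (by omega) le_rfl
    exact fun t ht => hsA2 t (h.2.mem_iff.mp ht)
  · have h := hperm (2*n-1) (by omega) le_rfl
    have o := horder (2*n-1) (by omega) le_rfl
    exact labels_eq hX'nd (fun t ht => hsA1 t (h.1.mem_iff.mp ht)) o.1
      ((labelsOf_perm h.1).trans (by rw [hsX]; exact hXp.trans hX'p.symm))
  · have h := hperm (2*n-1) (by omega) le_rfl
    have o := horder (2*n-1) (by omega) le_rfl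
    exact labels_eq hY'nd (fun t ht => hsA2 t (h.2.mem_iff.mp ht)) o.2
      ((labelsOf_perm h.2).trans (by rw [hsY]; exact hYp.trans hY'p.symm))
  · intro k hk1 hk2
    have h := hperm k hk1 hk2
    have o := horder k hk1 hk2
    have g := key k hk1 hk2
    exact promising_of G hX'Y' hTnd hSnd (seq' k)
      (fun u hu => g.1.1 u (h.1.mem_iff.mp hu))
      ((labelsOf_perm h.1).trans g.1.2)
      (fun u hu => g.2.1 u (h.2.mem_iff.mp hu))
      ((labelsOf_perm h.2).trans g.2.2)
      o.1 o.2
end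

section
/- Let (T,S,φ) be a tanglegram of size n and I ⊆ [n]. If the induced subtanglegram (T_I, S_{φ(I)}, φ|_I) is planar, then (T,S,φ) has a layout that restricts to a planar layout of (T_I, S_{φ(I)}, φ|_I). -/
/-! ### Auxiliary machinery for Statement 6 -/

namespace Statement6Aux

open BTree List

lemma mem_leaves {t : BTree} {a : ℕ} : a ∈ t.leaves ↔ a ∈ t.leafList :=
  List.mem_toFinset

lemma leaves_node (l r : BTree) : (BTree.node l r).leaves = l.leaves ∪ r.leaves := by
  simp [BTree.leaves, BTree.leafList]

lemma clade_self (t : BTree) : t.Clade t.leaves := by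
  cases t with
  | leaf i => simp [BTree.Clade, BTree.leaves, BTree.leafList]
  | node l r => exact Or.inl rfl

lemma consec_append_left {L R : List ℕ} {s : Finset ℕ} (h : ConsecIn L s) :
    ConsecIn (L ++ R) s := by
  obtain ⟨l, m, r, e, hm⟩ := h
  exact ⟨l, m, r ++ R, by simp [e], hm⟩

lemma consec_append_right {L R : List ℕ} {s : Finset ℕ} (h : ConsecIn R s) :
    ConsecIn (L ++ R) s := by
  obtain ⟨l, m, r, e, hm⟩ := h
  exact ⟨L ++ l, m, r, by simp [e], hm⟩

lemma clade_consec {t : BTree} {c : Finset ℕ} (h : t.Clade c) :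
    ConsecIn t.leafList c := by
  induction t with
  | leaf i =>
    subst h
    exact ⟨[], [i], [], rfl, by simp⟩
  | node l r ihl ihr =>
    rcases h with h | h | h
    · exact ⟨[], (BTree.node l r).leafList, [], by simp, fun a => by
        subst h; exact mem_leaves.symm⟩
    · exact consec_append_left (ihl h)
    · exact consec_append_right (ihr h)

/-- Minimal `A`-index over the leaves of `t`. -/
def minIdx (A : List ℕ) (t : BTree) : ℕ :=
  (t.leafList.map (fun a => A.idxOf a)).foldr min A.length

lemma foldr_min_le {L : List ℕ} {d x : ℕ} (hx : x ∈ L) : L.foldr min d ≤ x := by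
  induction L with
  | nil => cases hx
  | cons a t ih =>
    rcases List.mem_cons.1 hx with rfl | hx
    · exact min_le_left _ _
    · exact le_trans (min_le_right _ _) (ih hx)

lemma foldr_min_mem {L : List ℕ} {d : ℕ} : L.foldr min d = d ∨ L.foldr min d ∈ L := by
  induction L with
  | nil => exact Or.inl rfl
  | cons a t ih =>
    rcases le_total a (t.foldr min d) with h | h
    · exact Or.inr (by simp [min_eq_left h])
    · rw [List.foldr_cons, min_eq_right h]
      rcases ih with h' | h'
      · exact Or.inl h'
      · exact Or.inr (List.mem_cons_of_mem _ h')

lemma minIdx_le {A : List ℕ} {t : BTree} {a : ℕ} (ha : a ∈ t.leafList) :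
    minIdx A t ≤ A.idxOf a :=
  foldr_min_le (List.mem_map_of_mem ha)

lemma minIdx_mem {A : List ℕ} {t : BTree} :
    minIdx A t = A.length ∨ ∃ a ∈ t.leafList, minIdx A t = A.idxOf a := by
  rcases (foldr_min_mem (L := t.leafList.map (fun a => A.idxOf a)) (d := A.length)) with h | h
  · exact Or.inl h
  · obtain ⟨a, ha, he⟩ := List.mem_map.1 h
    exact Or.inr ⟨a, ha, he.symm⟩

/-- Reorder the children of `t` so that at each node the child with smaller minimal
`A`-index comes first. -/
def reorder (A : List ℕ) : BTree → BTree
  | .leaf i => .leaf i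
  | .node l r =>
      if minIdx A l ≤ minIdx A r then .node (reorder A l) (reorder A r)
      else .node (reorder A r) (reorder A l)

lemma reorder_perm (A : List ℕ) (t : BTree) :
    (reorder A t).leafList.Perm t.leafList := by
  induction t with
  | leaf i => simp [reorder]
  | node l r ihl ihr =>
    rw [reorder]
    split
    · simpa [BTree.leafList] using ihl.append ihr
    · show ((reorder A r).leafList ++ (reorder A l).leafList).Perm _
      exact (ihr.append ihl).trans List.perm_append_comm

lemma reorder_leaves (A : List ℕ) (t : BTree) : (reorder A t).leaves = t.leaves :=
  List.toFinset_eq_of_perm _ _ (reorder_perm A t)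

lemma reorder_clade (A : List ℕ) {t : BTree} {c : Finset ℕ} (h : t.Clade c) :
    (reorder A t).Clade c := by
  induction t with
  | leaf i => exact h
  | node l r ihl ihr =>
    rw [reorder]
    split
    · rcases h with h | h | h
      · refine Or.inl ?_
        rw [h]
        show _ = (BTree.node (reorder A l) (reorder A r)).leaves
        rw [leaves_node, leaves_node, reorder_leaves, reorder_leaves]
      · exact Or.inr (Or.inl (ihl h))
      · exact Or.inr (Or.inr (ihr h))
    · rcases h with h | h | h
      · refine Or.inl ?_
        rw [h]
        show _ = (BTree.node (reorder A r) (reorder A l)).leaves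
        rw [leaves_node, leaves_node, reorder_leaves, reorder_leaves,
          Finset.union_comm]
      · exact Or.inr (Or.inr (ihl h))
      · exact Or.inr (Or.inl (ihr h))

lemma indexOf_cons' (b a : ℕ) (l : List ℕ) (h : b ≠ a) :
    (b :: l).idxOf a = l.idxOf a + 1 := by
  simp [List.idxOf_cons, h]

lemma indexOf_append_right' (p l : List ℕ) (a : ℕ) (h : a ∉ p) :
    (p ++ l).idxOf a = p.length + l.idxOf a := by
  induction p with
  | nil => simp
  | cons b t ih =>
    have hb : b ≠ a := by rintro rfl; exact h (List.mem_cons_self)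
    have ht : a ∉ t := fun hx => h (List.mem_cons_of_mem _ hx)
    rw [List.cons_append, indexOf_cons' _ _ _ hb, ih ht]
    simp; omega

lemma indexOf_append_left' (m q : List ℕ) (a : ℕ) (h : a ∈ m) :
    (m ++ q).idxOf a = m.idxOf a := by
  induction m with
  | nil => cases h
  | cons b t ih =>
    by_cases hb : b = a
    · subst hb; simp [List.idxOf_cons]
    · have hat : a ∈ t := by
        rcases List.mem_cons.1 h with h' | h'
        · exact absurd h'.symm hb
        · exact h'
      rw [List.cons_append, indexOf_cons' _ _ _ hb, indexOf_cons' _ _ _ hb, ih hat]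

lemma indexOf_block {A : List ℕ} {p m q : List ℕ} (e : A = p ++ m ++ q)
    (hA : A.Nodup) {a : ℕ} (ha : a ∈ m) :
    p.length ≤ A.idxOf a ∧ A.idxOf a < p.length + m.length := by
  subst e
  rw [List.append_assoc] at hA ⊢
  have hap : a ∉ p := by
    intro hap
    exact (List.disjoint_of_nodup_append hA) hap (List.mem_append_left _ ha)
  rw [indexOf_append_right' _ _ _ hap, indexOf_append_left' _ _ _ ha]
  exact ⟨Nat.le_add_right _ _, by
    have := List.idxOf_lt_length_iff.2 ha
    omega⟩

lemma mem_block {A : List ℕ} {p m q : List ℕ} (e : A = p ++ m ++ q) {k : ℕ}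
    (hk : k < A.length) (h1 : p.length ≤ k) (h2 : k < p.length + m.length) :
    A[k] ∈ m := by
  subst e
  have h3 : k < (p ++ m).length := by simp; omega
  rw [List.getElem_append_left h3, List.getElem_append_right h1]
  exact List.getElem_mem _

lemma blocks_precede {A : List ℕ} (hA : A.Nodup) {s₁ s₂ : Finset ℕ}
    (h₁ : ConsecIn A s₁) (h₂ : ConsecIn A s₂) (hd : ∀ a, a ∈ s₁ → a ∉ s₂) :
    (∀ x ∈ s₁, ∀ y ∈ s₂, A.idxOf x < A.idxOf y) ∨
    (∀ y ∈ s₂, ∀ x ∈ s₁, A.idxOf y < A.idxOf x) := by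
  rcases s₁.eq_empty_or_nonempty with rfl | ⟨w₁, hw₁⟩
  · exact Or.inl (by simp)
  rcases s₂.eq_empty_or_nonempty with rfl | ⟨w₂, hw₂⟩
  · exact Or.inr (by simp)
  obtain ⟨p₁, m₁, q₁, e₁, hm₁⟩ := h₁
  obtain ⟨p₂, m₂, q₂, e₂, hm₂⟩ := h₂
  have hm₁ne : m₁ ≠ [] := by
    intro h
    have := (hm₁ w₁).2 hw₁
    simp [h] at this
  have hm₂ne : m₂ ≠ [] := by
    intro h
    have := (hm₂ w₂).2 hw₂
    simp [h] at this
  have hsep : p₁.length + m₁.length ≤ p₂.length ∨ p₂.length + m₂.length ≤ p₁.length := by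
    by_contra hcon
    push_neg at hcon
    obtain ⟨hc₁, hc₂⟩ := hcon
    set k := max p₁.length p₂.length with hk
    have hk1 : p₁.length ≤ k := le_max_left _ _
    have hk2 : p₂.length ≤ k := le_max_right _ _
    have hkm1 : k < p₁.length + m₁.length := by
      rcases max_cases p₁.length p₂.length with ⟨h, _⟩ | ⟨h, _⟩ <;> rw [hk, h]
      · have := List.length_pos_iff.2 hm₁ne; omega
      · omega
    have hkm2 : k < p₂.length + m₂.length := by
      rcases max_cases p₁.length p₂.length with ⟨h, _⟩ | ⟨h, _⟩ <;> rw [hk, h]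
      · omega
      · have := List.length_pos_iff.2 hm₂ne; omega
    have hkA : k < A.length := by
      rw [e₁]; simp; omega
    have hin1 : A[k] ∈ m₁ := mem_block e₁ hkA hk1 hkm1
    have hin2 : A[k] ∈ m₂ := mem_block e₂ hkA hk2 hkm2
    exact hd _ ((hm₁ _).1 hin1) ((hm₂ _).1 hin2)
  rcases hsep with hsep | hsep
  · refine Or.inl fun x hx y hy => ?_
    have hx' := indexOf_block e₁ hA ((hm₁ x).2 hx)
    have hy' := indexOf_block e₂ hA ((hm₂ y).2 hy)
    omega
  · refine Or.inr fun y hy x hx => ?_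
    have hx' := indexOf_block e₁ hA ((hm₁ x).2 hx)
    have hy' := indexOf_block e₂ hA ((hm₂ y).2 hy)
    omega

lemma filter_split {A : List ℕ} (p q : ℕ → Bool) (hA : A.Nodup)
    (hd : ∀ x ∈ A, ¬(p x = true ∧ q x = true))
    (ho : ∀ x ∈ A, ∀ y ∈ A, p x = true → q y = true → A.idxOf x < A.idxOf y) :
    A.filter (fun a => p a || q a) = A.filter p ++ A.filter q := by
  induction A with
  | nil => simp
  | cons a t ih =>
    have hat : a ∉ t := (List.nodup_cons.1 hA).1
    have ht : t.Nodup := (List.nodup_cons.1 hA).2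
    have ho' : ∀ x ∈ t, ∀ y ∈ t, p x = true → q y = true → t.idxOf x < t.idxOf y := by
      intro x hx y hy hpx hqy
      have h := ho x (List.mem_cons_of_mem _ hx) y (List.mem_cons_of_mem _ hy) hpx hqy
      have hxa : a ≠ x := fun h' => hat (h' ▸ hx)
      have hya : a ≠ y := fun h' => hat (h' ▸ hy)
      rw [indexOf_cons' _ _ _ hxa, indexOf_cons' _ _ _ hya] at h
      omega
    have hd' : ∀ x ∈ t, ¬(p x = true ∧ q x = true) :=
      fun x hx => hd x (List.mem_cons_of_mem _ hx)
    by_cases hp : p a = true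
    · have hq : ¬ q a = true := fun hq => hd a (List.mem_cons_self) ⟨hp, hq⟩
      simp only [List.filter_cons, hp, hq, Bool.true_or, if_true, if_pos, cond_true]
      rw [ih ht hd' ho']
      simp [hq]
    · by_cases hq : q a = true
      · have hnop : ∀ x ∈ t, ¬ p x = true := by
          intro x hx hpx
          have h := ho x (List.mem_cons_of_mem _ hx) a (List.mem_cons_self) hpx hq
          rw [List.idxOf_cons_self] at h
          omega
        have h1 : t.filter (fun a => p a || q a) = t.filter q :=
          List.filter_congr fun x hx => by
            simp [Bool.eq_false_iff.2 (hnop x hx)]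
        have h2 : t.filter p = [] := List.filter_eq_nil_iff.2 hnop
        simp [List.filter_cons, hp, hq, h1, h2]
      · simp only [List.filter_cons, hp, hq, Bool.false_or, if_neg, cond_false]
        rw [ih ht hd' ho']
        simp [hp, hq]

lemma minIdx_lt {A : List ℕ} (I : Finset ℕ) (hmem : ∀ a, a ∈ A ↔ a ∈ I)
    (l r : BTree) (h1 : (l.leaves ∩ I).Nonempty)
    (hord : ∀ x ∈ l.leaves ∩ I, ∀ y ∈ r.leaves ∩ I, A.idxOf x < A.idxOf y) :
    minIdx A l < minIdx A r := by
  obtain ⟨x, hx⟩ := h1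
  have hxl : x ∈ l.leafList := mem_leaves.1 (Finset.mem_inter.1 hx).1
  have hxA : x ∈ A := (hmem x).2 (Finset.mem_inter.1 hx).2
  have hxlt : A.idxOf x < A.length := List.idxOf_lt_length_iff.2 hxA
  have hminl : minIdx A l ≤ A.idxOf x := minIdx_le hxl
  rcases minIdx_mem (A := A) (t := r) with h | ⟨a, ha, he⟩
  · omega
  · by_cases haA : a ∈ A
    · have haI : a ∈ r.leaves ∩ I :=
        Finset.mem_inter.2 ⟨mem_leaves.2 ha, (hmem a).1 haA⟩
      have := hord x hx a haI
      omega
    · rw [he, List.idxOf_eq_length haA]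
      omega

lemma filter_singleton_of_nodup {A : List ℕ} (hA : A.Nodup) {i : ℕ} (h : i ∈ A) :
    A.filter (fun a => decide (a = i)) = [i] := by
  induction A with
  | nil => cases h
  | cons a t ih =>
    have hat : a ∉ t := (List.nodup_cons.1 hA).1
    have ht : t.Nodup := (List.nodup_cons.1 hA).2
    by_cases ha : a = i
    · subst ha
      have : t.filter (fun x => decide (x = a)) = [] :=
        List.filter_eq_nil_iff.2 fun x hx => by
          simp only [decide_eq_true_eq]
          rintro rfl; exact hat hx
      simp [List.filter_cons, this]
    · have hit : i ∈ t := by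
        rcases List.mem_cons.1 h with h' | h'
        · exact absurd h'.symm ha
        · exact h'
      simp [List.filter_cons, ha, ih ht hit]

lemma key (t : BTree) (A : List ℕ) (I : Finset ℕ) (hA : A.Nodup)
    (hmem : ∀ a, a ∈ A ↔ a ∈ I) (ht : t.leafList.Nodup)
    (hcons : ∀ c, t.Clade c → ConsecIn A (c ∩ I)) :
    (reorder A t).leafList.filter (fun a => decide (a ∈ I)) =
      A.filter (fun a => decide (a ∈ t.leaves)) := by
  induction t with
  | leaf i =>
    have hlv : (BTree.leaf i).leaves = {i} := by
      simp [BTree.leaves, BTree.leafList]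
    by_cases hi : i ∈ I
    · have hiA : i ∈ A := (hmem i).2 hi
      have : A.filter (fun a => decide (a ∈ (BTree.leaf i).leaves)) =
          A.filter (fun a => decide (a = i)) :=
        List.filter_congr fun a _ => by simp [hlv]
      rw [this, filter_singleton_of_nodup hA hiA]
      simp [reorder, BTree.leafList, hi]
    · have : A.filter (fun a => decide (a ∈ (BTree.leaf i).leaves)) = [] :=
        List.filter_eq_nil_iff.2 fun a haA => by
          simp only [hlv, Finset.mem_singleton, decide_eq_true_eq]
          rintro rfl; exact hi ((hmem a).1 haA)
      rw [this]
      simp [reorder, BTree.leafList, hi]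
  | node l r ihl ihr =>
    have hnodeL : (BTree.node l r).leafList = l.leafList ++ r.leafList := rfl
    rw [hnodeL] at ht
    have htl : l.leafList.Nodup := (List.nodup_append.1 ht).1
    have htr : r.leafList.Nodup := (List.nodup_append.1 ht).2.1
    have hdisjL : l.leafList.Disjoint r.leafList := List.disjoint_of_nodup_append ht
    have hconsl : ∀ c, l.Clade c → ConsecIn A (c ∩ I) :=
      fun c hc => hcons c (Or.inr (Or.inl hc))
    have hconsr : ∀ c, r.Clade c → ConsecIn A (c ∩ I) :=
      fun c hc => hcons c (Or.inr (Or.inr hc))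
    have IHl := ihl htl hconsl
    have IHr := ihr htr hconsr
    have hdisj : ∀ a, a ∈ l.leaves ∩ I → a ∉ r.leaves ∩ I := by
      intro a ha hb
      exact hdisjL (mem_leaves.1 (Finset.mem_inter.1 ha).1)
        (mem_leaves.1 (Finset.mem_inter.1 hb).1)
    have hc1 : ConsecIn A (l.leaves ∩ I) := hconsl l.leaves (clade_self l)
    have hc2 : ConsecIn A (r.leaves ∩ I) := hconsr r.leaves (clade_self r)
    have hnode_mem : ∀ a, (a ∈ (BTree.node l r).leaves) ↔ (a ∈ l.leaves ∨ a ∈ r.leaves) := by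
      intro a; rw [leaves_node]; exact Finset.mem_union
    rcases (l.leaves ∩ I).eq_empty_or_nonempty with h1 | h1
    · -- left part contributes nothing
      have hLf : A.filter (fun a => decide (a ∈ l.leaves)) = [] :=
        List.filter_eq_nil_iff.2 fun a haA => by
          simp only [decide_eq_true_eq]
          intro hal
          have : a ∈ l.leaves ∩ I := Finset.mem_inter.2 ⟨hal, (hmem a).1 haA⟩
          rw [h1] at this
          exact absurd this (Finset.notMem_empty a)
      have hRHS : A.filter (fun a => decide (a ∈ (BTree.node l r).leaves)) =
          A.filter (fun a => decide (a ∈ r.leaves)) :=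
        List.filter_congr fun a haA => by
          simp only [decide_eq_decide, hnode_mem]
          constructor
          · rintro (h | h)
            · exfalso
              have : a ∈ l.leaves ∩ I := Finset.mem_inter.2 ⟨h, (hmem a).1 haA⟩
              rw [h1] at this
              exact absurd this (Finset.notMem_empty a)
            · exact h
          · exact Or.inr
      rw [hRHS]
      rw [reorder]
      split <;>
      · show ((_ : BTree).leafList ++ (_ : BTree).leafList).filter _ = _
        rw [List.filter_append, IHl, IHr, hLf] <;> simp [hLf]
    · rcases (r.leaves ∩ I).eq_empty_or_nonempty with h2 | h2
      · have hRf : A.filter (fun a => decide (a ∈ r.leaves)) = [] :=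
          List.filter_eq_nil_iff.2 fun a haA => by
            simp only [decide_eq_true_eq]
            intro hal
            have : a ∈ r.leaves ∩ I := Finset.mem_inter.2 ⟨hal, (hmem a).1 haA⟩
            rw [h2] at this
            exact absurd this (Finset.notMem_empty a)
        have hRHS : A.filter (fun a => decide (a ∈ (BTree.node l r).leaves)) =
            A.filter (fun a => decide (a ∈ l.leaves)) :=
          List.filter_congr fun a haA => by
            simp only [decide_eq_decide, hnode_mem]
            constructor
            · rintro (h | h)
              · exact h
              · exfalso
                have : a ∈ r.leaves ∩ I := Finset.mem_inter.2 ⟨h, (hmem a).1 haA⟩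
                rw [h2] at this
                exact absurd this (Finset.notMem_empty a)
            · exact Or.inl
        rw [hRHS]
        rw [reorder]
        split <;>
        · show ((_ : BTree).leafList ++ (_ : BTree).leafList).filter _ = _
          rw [List.filter_append, IHl, IHr, hRf] <;> simp [hRf]
      · -- both nonempty
        rcases blocks_precede hA hc1 hc2 hdisj with hord | hord
        · have hmin : minIdx A l ≤ minIdx A r :=
            le_of_lt (minIdx_lt I hmem l r h1 hord)
          rw [reorder, if_pos hmin]
          show ((reorder A l).leafList ++ (reorder A r).leafList).filter _ = _
          rw [List.filter_append, IHl, IHr]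
          rw [← filter_split (fun a => decide (a ∈ l.leaves))
                (fun a => decide (a ∈ r.leaves)) hA ?_ ?_]
          · exact List.filter_congr fun a haA => by
              rw [decide_eq_decide.2 (hnode_mem a), Bool.decide_or]
          · intro x hx ⟨hpx, hqx⟩
            simp only [decide_eq_true_eq] at hpx hqx
            exact hdisj x (Finset.mem_inter.2 ⟨hpx, (hmem x).1 hx⟩)
              (Finset.mem_inter.2 ⟨hqx, (hmem x).1 hx⟩)
          · intro x hx y hy hpx hqy
            simp only [decide_eq_true_eq] at hpx hqy
            exact hord x (Finset.mem_inter.2 ⟨hpx, (hmem x).1 hx⟩)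
              y (Finset.mem_inter.2 ⟨hqy, (hmem y).1 hy⟩)
        · have hord' : ∀ x ∈ r.leaves ∩ I, ∀ y ∈ l.leaves ∩ I,
              A.idxOf x < A.idxOf y := hord
          have hmin : minIdx A r < minIdx A l :=
            minIdx_lt I hmem r l h2 hord'
          rw [reorder, if_neg (by omega)]
          show ((reorder A r).leafList ++ (reorder A l).leafList).filter _ = _
          rw [List.filter_append, IHl, IHr]
          rw [← filter_split (fun a => decide (a ∈ r.leaves))
                (fun a => decide (a ∈ l.leaves)) hA ?_ ?_]
          · exact List.filter_congr fun a haA => by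
              rw [decide_eq_decide.2 (hnode_mem a), Bool.decide_or, Bool.or_comm]
          · intro x hx ⟨hpx, hqx⟩
            simp only [decide_eq_true_eq] at hpx hqx
            exact hdisj x (Finset.mem_inter.2 ⟨hqx, (hmem x).1 hx⟩)
              (Finset.mem_inter.2 ⟨hpx, (hmem x).1 hx⟩)
          · intro x hx y hy hpx hqy
            simp only [decide_eq_true_eq] at hpx hqy
            exact hord x (Finset.mem_inter.2 ⟨hpx, (hmem x).1 hx⟩)
              y (Finset.mem_inter.2 ⟨hqy, (hmem y).1 hy⟩)

end Statement6Aux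

/-- If the subtanglegram of `(T,S,φ)` induced by `I ⊆ [n]` is
planar, then `(T,S,φ)` has a layout that restricts to a planar layout of the induced
subtanglegram. -/
theorem exists_layout_restricting_planar {n : ℕ} (G : Tanglegram n) (I : Finset ℕ)
    (hI : I ⊆ Finset.range n) (hpl : SubPlanar G I) :
    ∃ X Y : List ℕ, IsLayout G X Y ∧ RestrictsToPlanarSub G I X Y := by
  classical
  obtain ⟨A, B, hsub, hplan⟩ := hpl
  obtain ⟨hAnd, hAI, hBnd, hBJ, hconsA, hconsB⟩ := hsub
  set J := I.image G.φ with hJ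
  refine ⟨(Statement6Aux.reorder A G.T).leafList, (Statement6Aux.reorder B G.S).leafList, ?_, ?_⟩
  · refine ⟨Statement6Aux.reorder_perm A G.T, Statement6Aux.reorder_perm B G.S, ?_, ?_⟩
    · exact fun s hs => Statement6Aux.clade_consec (Statement6Aux.reorder_clade A hs)
    · exact fun s hs => Statement6Aux.clade_consec (Statement6Aux.reorder_clade B hs)
  · have hX : (Statement6Aux.reorder A G.T).leafList.filter (fun a => decide (a ∈ I)) = A := by
      rw [Statement6Aux.key G.T A I hAnd hAI G.hT.1 hconsA]
      exact List.filter_eq_self.2 fun a haA => by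
        simp only [decide_eq_true_eq, Statement6Aux.mem_leaves]
        exact (G.hT.2 a).2 (Finset.mem_range.1 (hI ((hAI a).1 haA)))
    have hY : (Statement6Aux.reorder B G.S).leafList.filter (fun b => decide (b ∈ J)) = B := by
      rw [Statement6Aux.key G.S B J hBnd hBJ G.hS.1 hconsB]
      exact List.filter_eq_self.2 fun b hbB => by
        simp only [decide_eq_true_eq, Statement6Aux.mem_leaves]
        obtain ⟨i, hiI, rfl⟩ := Finset.mem_image.1 ((hBJ b).1 hbB)
        have hin : i < n := Finset.mem_range.1 (hI hiI)
        have : G.φ i < n := by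
          by_contra hge
          push_neg at hge
          have := G.hφ _ hge
          have := G.φ.injective this
          omega
        exact (G.hS.2 _).2 this
    show IsPlanarSubLayout G I _ _
    rw [← hJ, hX, hY]
    exact ⟨⟨hAnd, hAI, hBnd, hBJ, hconsA, hconsB⟩, hplan⟩
end

section
/- Let (T,S,φ) be a tanglegram of size n and I ⊆ [n] with (T_I, S_{φ(I)}, φ|_I) planar. Let u be an internal vertex of T and v an internal vertex of S such that φ matches the leaves of leaf(u) indexed by I exactly with the leaves of leaf(v) indexed by φ(I), and such that the number of leaves of leaf(u) indexed by I is greater than 1. Let u_red be the minimal vertex u' of T with u' ≤_T u and leaf(u') ∩ {t_j : j ∈ I} = leaf(u) ∩ {t_j : j ∈ I}, and let v_red be the minimal vertex v' of S with v' ≤_S v and leaf(v') ∩ {s_j : j ∈ φ(I)} = leaf(v) ∩ {s_j : j ∈ φ(I)}. Then u_red is an internal vertex of T_I, v_red is an internal vertex of S_{φ(I)}, and (u_red, v_red) is a leaf-matched pair of (T_I, S_{φ(I)}, φ|_I). -/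
namespace BTree

lemma leafList_ne_nil_s7 (t : BTree) : t.leafList ≠ [] := by
  induction t with
  | leaf i => simp [leafList]
  | node l r ihl ihr => simp [leafList, ihl]

lemma clade_self (t : BTree) : t.Clade t.leaves := by
  cases t with
  | leaf i => simp [Clade, leaves, leafList]
  | node l r => exact Or.inl rfl

lemma leaves_node (l r : BTree) :
    (BTree.node l r).leaves = l.leaves ∪ r.leaves := by
  simp [leaves, leafList]

lemma leaves_nonempty (t : BTree) : t.leaves.Nonempty := by
  obtain ⟨x, hx⟩ := List.exists_mem_of_ne_nil _ t.leafList_ne_nil_s7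
  exact ⟨x, List.mem_toFinset.mpr hx⟩

lemma clade_split (t : BTree) (hnd : t.leafList.Nodup) {c : Finset ℕ}
    (hc : t.Clade c) (hcard : 1 < c.card) :
    ∃ c₁ c₂, t.NodeClades c c₁ c₂ ∧ t.Clade c₁ ∧ t.Clade c₂ ∧
      c₁ ∪ c₂ = c ∧ Disjoint c₁ c₂ ∧ c₁.Nonempty ∧ c₂.Nonempty := by
  induction t with
  | leaf i =>
    simp only [Clade] at hc
    subst hc
    simp at hcard
  | node l r ihl ihr =>
    have hnd' : l.leafList.Nodup ∧ r.leafList.Nodup ∧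
        l.leafList.Disjoint r.leafList := by
      obtain ⟨h1, h2, h3⟩ := List.nodup_append.mp (show (l.leafList ++ r.leafList).Nodup from hnd)
      refine ⟨h1, h2, ?_⟩
      intro a ha hb
      exact h3 a ha a hb rfl
    rcases hc with hc | hc | hc
    · refine ⟨l.leaves, r.leaves, Or.inl ⟨hc, rfl, rfl⟩,
        Or.inr (Or.inl l.clade_self), Or.inr (Or.inr r.clade_self), ?_, ?_,
        l.leaves_nonempty, r.leaves_nonempty⟩
      · rw [hc, leaves_node]
      · rw [Finset.disjoint_left]
        intro a ha ha'
        exact hnd'.2.2 (List.mem_toFinset.mp ha) (List.mem_toFinset.mp ha')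
    · obtain ⟨c₁, c₂, h1, h2, h3, h4, h5, h6, h7⟩ := ihl hnd'.1 hc
      exact ⟨c₁, c₂, Or.inr (Or.inl h1), Or.inr (Or.inl h2), Or.inr (Or.inl h3),
        h4, h5, h6, h7⟩
    · obtain ⟨c₁, c₂, h1, h2, h3, h4, h5, h6, h7⟩ := ihr hnd'.2.1 hc
      exact ⟨c₁, c₂, Or.inr (Or.inr h1), Or.inr (Or.inr h2), Or.inr (Or.inr h3),
        h4, h5, h6, h7⟩

/-- Key lemma: a minimal clade whose intersection with `J` has more than one element
survives as an internal vertex. -/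
lemma survives_of_min (t : BTree) (hnd : t.leafList.Nodup) (J : Finset ℕ)
    {cu cr : Finset ℕ} (hcr : t.Clade cr) (hcr₁ : cr ⊆ cu) (hcr₂ : cr ∩ J = cu ∩ J)
    (hcrmin : ∀ c', t.Clade c' → c' ⊆ cu → c' ∩ J = cu ∩ J → cr ⊆ c')
    (hcard : 1 < (cu ∩ J).card) : SurvivesInternal t J cr := by
  have hcard' : 1 < cr.card := by
    have h1 : 1 < (cr ∩ J).card := hcr₂ ▸ hcard
    exact lt_of_lt_of_le h1 (Finset.card_le_card Finset.inter_subset_left)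
  obtain ⟨c₁, c₂, hn, hcl₁, hcl₂, hun, hdisj, hne₁, hne₂⟩ :=
    t.clade_split hnd hcr hcard'
  refine ⟨c₁, c₂, hn, ?_, ?_⟩
  · by_contra h
    rw [Finset.not_nonempty_iff_eq_empty] at h
    have hc2 : c₂ ∩ J = cu ∩ J := by
      rw [← hcr₂, ← hun, Finset.union_inter_distrib_right, h, Finset.empty_union]
    have hsub : cr ⊆ c₂ :=
      hcrmin c₂ hcl₂ (le_trans (hun ▸ Finset.subset_union_right) hcr₁) hc2
    obtain ⟨x, hx⟩ := hne₁
    exact (Finset.disjoint_left.mp hdisj hx)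
      (hsub (hun ▸ Finset.mem_union_left _ hx))
  · by_contra h
    rw [Finset.not_nonempty_iff_eq_empty] at h
    have hc1 : c₁ ∩ J = cu ∩ J := by
      rw [← hcr₂, ← hun, Finset.union_inter_distrib_right, h, Finset.union_empty]
    have hsub : cr ⊆ c₁ :=
      hcrmin c₁ hcl₁ (le_trans (hun ▸ Finset.subset_union_left) hcr₁) hc1
    obtain ⟨x, hx⟩ := hne₂
    exact (Finset.disjoint_left.mp hdisj.symm hx)
      (hsub (hun ▸ Finset.mem_union_right _ hx))

end BTree

/-- Let `(T,S,φ)` be a tanglegram of size `n` and `I ⊆ [n]` with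
the induced subtanglegram planar.  Let `u` be an internal vertex of `T` (with leaf
set `cu`) and `v` an internal vertex of `S` (with leaf set `cv`) such that `φ`
matches the leaves of `u` indexed by `I` exactly with the leaves of `v` indexed by
`φ(I)` and `u` has more than one leaf indexed by `I`.  Let `u_red` (with leaf set
`cr`) be the minimal vertex below `u` with the same leaves indexed by `I`, and
`v_red` (with leaf set `sr`) the minimal vertex below `v` with the same leaves
indexed by `φ(I)`.  Then `u_red` is an internal vertex of `T_I`, `v_red` is an
internal vertex of `S_{φ(I)}`, and `(u_red, v_red)` is a leaf-matched pair of the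
induced subtanglegram (i.e. a member of `L(I)`). -/
theorem reduced_pair_mem_LI {n : ℕ} (G : Tanglegram n) (I : Finset ℕ)
    (hI : I ⊆ Finset.range n) (hpl : SubPlanar G I)
    (cu cv : Finset ℕ)
    (hcu : G.T.InternalClade cu) (hcv : G.S.InternalClade cv)
    (hmatch : (cu ∩ I).image G.φ = cv ∩ I.image G.φ)
    (hcard : 1 < (cu ∩ I).card)
    (cr : Finset ℕ) (hcr : G.T.Clade cr) (hcr₁ : cr ⊆ cu) (hcr₂ : cr ∩ I = cu ∩ I)
    (hcrmin : ∀ c', G.T.Clade c' → c' ⊆ cu → c' ∩ I = cu ∩ I → cr ⊆ c')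
    (sr : Finset ℕ) (hsr : G.S.Clade sr) (hsr₁ : sr ⊆ cv)
    (hsr₂ : sr ∩ I.image G.φ = cv ∩ I.image G.φ)
    (hsrmin : ∀ d', G.S.Clade d' → d' ⊆ cv → d' ∩ I.image G.φ = cv ∩ I.image G.φ →
      sr ⊆ d') :
    MemLI G I cr sr := by
  have hcard' : 1 < (cv ∩ I.image G.φ).card := by
    rw [← hmatch, Finset.card_image_of_injective _ G.φ.injective]
    exact hcard
  refine ⟨?_, ?_, ?_⟩
  · exact BTree.survives_of_min G.T G.hT.1 I hcr hcr₁ hcr₂ hcrmin hcard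
  · exact BTree.survives_of_min G.S G.hS.1 (I.image G.φ) hsr hsr₁
      (hsr₂.trans hmatch.symm ▸ hsr₂)
      (fun d' h1 h2 h3 => hsrmin d' h1 h2 h3) (hmatch ▸ hcard')
  · rw [hcr₂, hmatch, hsr₂]
end
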